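/- arXiv:math/0309329 — 8 statements merged into one kernel-verified Lean document; each statement's English description precedes it below -/
import Mathlib

section
/- Let x be a GT-pattern with tiling 𝒫 and tiling matrix A_𝒫. Then the dimension of the kernel of A_𝒫 equals the dimension of the minimal face of the GT-polytope GT(λ,μ) containing x, where λ is the top row of x and μ is determined by the row sums of x. -/
/-- Valid index positions of a triangular array of size `n`. -/
abbrev IdxP (n i j : ℕ) : Prop := 1 ≤ i ∧ i ≤ j ∧ j ≤ n

/-- A Gelfand--Tsetlin pattern of size `n` (entries outside the triangle are ignored). -/
def IsGTPattern (n : ℕ) (x : ℕ → ℕ → ℝ) : Prop :=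
  (∀ i j, IdxP n i j → 0 ≤ x i j) ∧
  (∀ i j, 1 ≤ i → i ≤ j → j + 1 ≤ n → x i (j + 1) ≥ x i j ∧ x i j ≥ x (i + 1) (j + 1))

/-- Membership in the Gelfand--Tsetlin polytope `GT(λ,μ)`: a GT-pattern, vanishing outside the
triangle, with top row `λ` and `j`-th row sum `μ₁ + ⋯ + μⱼ`. -/
def GTMem (n : ℕ) (lam mu : ℕ → ℤ) (x : ℕ → ℕ → ℝ) : Prop :=
  IsGTPattern n x ∧
  (∀ i j, ¬ IdxP n i j → x i j = 0) ∧
  (∀ i, 1 ≤ i → i ≤ n → x i n = (lam i : ℝ)) ∧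
  (∀ j, 1 ≤ j → j ≤ n → ∑ i ∈ Finset.Icc 1 j, x i j = ∑ t ∈ Finset.Icc 1 j, (mu t : ℝ))

/-- Adjacency of positions in the triangular arrangement: offsets `(±1,±1)` and `(0,±1)`. -/
def Adj (p q : ℕ × ℕ) : Prop :=
  (q.1 = p.1 + 1 ∧ q.2 = p.2 + 1) ∨ (q.1 = p.1 ∧ q.2 = p.2 + 1) ∨
  (p.1 = q.1 + 1 ∧ p.2 = q.2 + 1) ∨ (p.1 = q.1 ∧ p.2 = q.2 + 1)

/-- One step of the tile relation: adjacent valid positions carrying equal entries. -/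
def Step (n : ℕ) (x : ℕ → ℕ → ℝ) (p q : ℕ × ℕ) : Prop :=
  IdxP n p.1 p.2 ∧ IdxP n q.1 q.2 ∧ Adj p q ∧ x p.1 p.2 = x q.1 q.2

/-- Two positions lie in the same tile of the tiling of `x`. -/
def SameTile (n : ℕ) (x : ℕ → ℕ → ℝ) (p q : ℕ × ℕ) : Prop :=
  Relation.ReflTransGen (Step n x) p q

/-- A tile of the tiling of `x`. -/
def IsTile (n : ℕ) (x : ℕ → ℕ → ℝ) (T : Set (ℕ × ℕ)) : Prop :=
  ∃ p : ℕ × ℕ, IdxP n p.1 p.2 ∧ T = {q | SameTile n x p q}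

/-- A free tile: a tile meeting neither the bottom entry `(1,1)` nor the top row `(i,n)`. -/
def IsFreeTile (n : ℕ) (x : ℕ → ℕ → ℝ) (T : Set (ℕ × ℕ)) : Prop :=
  IsTile n x T ∧ ((1, 1) : ℕ × ℕ) ∉ T ∧ ∀ i, ((i, n) : ℕ × ℕ) ∉ T

/-- The tiling matrix over `ℝ`: rows indexed by `j = 2, …, n-1` (here `j = j₀ + 2`), columns by
the free tiles `P 1, …, P s`; the `(j,k)` entry is `#{i : (i,j) ∈ P k}`. -/
noncomputable def tileMat (n s : ℕ) (P : Fin s → Set (ℕ × ℕ)) :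
    Matrix (Fin (n - 2)) (Fin s) ℝ :=
  fun j k => ({i : ℕ | (i, j.1 + 2) ∈ P k}.ncard : ℝ)

/-- The minimal face of a convex set `S` containing `x`: the points of `S` lying on an open
segment within `S` through `x`, together with `x` itself. -/
def minFace (S : Set (ℕ → ℕ → ℝ)) (x : ℕ → ℕ → ℝ) : Set (ℕ → ℕ → ℝ) :=
  insert x {y ∈ S | ∃ z ∈ S, x ∈ openSegment ℝ y z}


open Finset

lemma adj_symm {p q : ℕ × ℕ} (h : Adj p q) : Adj q p := by
  rcases h with h | h | h | h
  · exact Or.inr (Or.inr (Or.inl h))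
  · exact Or.inr (Or.inr (Or.inr h))
  · exact Or.inl h
  · exact Or.inr (Or.inl h)

lemma step_symm {n : ℕ} {x : ℕ → ℕ → ℝ} {p q : ℕ × ℕ} (h : Step n x p q) : Step n x q p :=
  ⟨h.2.1, h.1, adj_symm h.2.2.1, h.2.2.2.symm⟩

lemma sameTile_symm {n : ℕ} {x : ℕ → ℕ → ℝ} {p q : ℕ × ℕ} (h : SameTile n x p q) :
    SameTile n x q p := by
  induction h with
  | refl => exact Relation.ReflTransGen.refl
  | tail _ hstep ih => exact Relation.ReflTransGen.head (step_symm hstep) ih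

lemma sameTile_valid {n : ℕ} {x : ℕ → ℕ → ℝ} {p q : ℕ × ℕ} (hp : IdxP n p.1 p.2)
    (h : SameTile n x p q) : IdxP n q.1 q.2 := by
  induction h with
  | refl => exact hp
  | tail _ hstep _ => exact hstep.2.1

section TileLemmas

variable {n s : ℕ} {x : ℕ → ℕ → ℝ} {P : Fin s → Set (ℕ × ℕ)}

lemma mem_tile_closed (hP : ∀ k, IsFreeTile n x (P k)) {k : Fin s} {p q : ℕ × ℕ}
    (hpk : p ∈ P k) (h : SameTile n x p q) : q ∈ P k := by
  obtain ⟨b, hb, hPk⟩ := (hP k).1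
  rw [hPk] at hpk ⊢
  exact Relation.ReflTransGen.trans hpk h

lemma mem_tile_valid (hP : ∀ k, IsFreeTile n x (P k)) {k : Fin s} {p : ℕ × ℕ}
    (hpk : p ∈ P k) : IdxP n p.1 p.2 := by
  obtain ⟨b, hb, hPk⟩ := (hP k).1
  rw [hPk] at hpk
  exact sameTile_valid hb hpk

lemma tile_disjoint (hP : ∀ k, IsFreeTile n x (P k)) (hPinj : Function.Injective P)
    {k l : Fin s} {p : ℕ × ℕ} (hk : p ∈ P k) (hl : p ∈ P l) : k = l := by
  obtain ⟨bk, hbk, hPk⟩ := (hP k).1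
  obtain ⟨bl, hbl, hPl⟩ := (hP l).1
  apply hPinj
  rw [hPk, hPl]
  rw [hPk] at hk; rw [hPl] at hl
  have hlk : SameTile n x bl bk := Relation.ReflTransGen.trans hl (sameTile_symm hk)
  ext q
  constructor
  · intro hq; exact Relation.ReflTransGen.trans hlk hq
  · intro hq; exact Relation.ReflTransGen.trans (sameTile_symm hlk) hq

end TileLemmas

open Classical in
/-- Assignment of a value per free tile, as a triangular array. -/
noncomputable def Phi {s : ℕ} (P : Fin s → Set (ℕ × ℕ)) (c : Fin s → ℝ) : ℕ → ℕ → ℝ :=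
  fun i j => ∑ k, if (i, j) ∈ P k then c k else 0

section PhiLemmas

variable {n s : ℕ} {x : ℕ → ℕ → ℝ} {P : Fin s → Set (ℕ × ℕ)}

lemma phi_eq_of_mem (hP : ∀ k, IsFreeTile n x (P k)) (hPinj : Function.Injective P)
    {c : Fin s → ℝ} {k : Fin s} {i j : ℕ} (h : (i, j) ∈ P k) : Phi P c i j = c k := by
  classical
  unfold Phi
  rw [Finset.sum_eq_single k]
  · simp [h]
  · intro l _ hlk
    rw [if_neg]
    intro hl
    exact hlk (tile_disjoint hP hPinj hl h)
  · simp

lemma phi_eq_zero {c : Fin s → ℝ} {i j : ℕ} (h : ∀ k, (i, j) ∉ P k) : Phi P c i j = 0 := by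
  unfold Phi
  exact Finset.sum_eq_zero fun k _ => if_neg (h k)

lemma phi_step (hP : ∀ k, IsFreeTile n x (P k)) (hPinj : Function.Injective P)
    {c : Fin s → ℝ} {p q : ℕ × ℕ} (h : Step n x p q) :
    Phi P c p.1 p.2 = Phi P c q.1 q.2 := by
  by_cases hk : ∃ k, p ∈ P k
  · obtain ⟨k, hk⟩ := hk
    have hq : q ∈ P k := mem_tile_closed hP hk (Relation.ReflTransGen.single h)
    have hk' : (p.1, p.2) ∈ P k := hk
    have hq' : (q.1, q.2) ∈ P k := hq
    rw [phi_eq_of_mem hP hPinj hk', phi_eq_of_mem hP hPinj hq']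
  · push_neg at hk
    have hq : ∀ k, q ∉ P k := by
      intro k hq
      exact hk k (mem_tile_closed hP hq (Relation.ReflTransGen.single (step_symm h)))
    rw [phi_eq_zero (fun k => hk k), phi_eq_zero (fun k => hq k)]

lemma phi_sameTile (hP : ∀ k, IsFreeTile n x (P k)) (hPinj : Function.Injective P)
    {c : Fin s → ℝ} {p q : ℕ × ℕ} (h : SameTile n x p q) :
    Phi P c p.1 p.2 = Phi P c q.1 q.2 := by
  induction h with
  | refl => rfl
  | tail _ hstep ih => exact ih.trans (phi_step hP hPinj hstep)

/-- Phi as a linear map. -/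
noncomputable def PhiL (P : Fin s → Set (ℕ × ℕ)) : (Fin s → ℝ) →ₗ[ℝ] (ℕ → ℕ → ℝ) where
  toFun := Phi P
  map_add' c c' := by
    funext i j
    unfold Phi
    simp only [Pi.add_apply]
    rw [← Finset.sum_add_distrib]
    exact Finset.sum_congr rfl fun k _ => by split <;> simp
  map_smul' a c := by
    funext i j
    unfold Phi
    simp only [Pi.smul_apply, smul_eq_mul, RingHom.id_apply]
    rw [Finset.mul_sum]
    exact Finset.sum_congr rfl fun k _ => by split <;> simp

@[simp] lemma phiL_apply (c : Fin s → ℝ) : PhiL P c = Phi P c := rfl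

lemma sum_phi_row (hP : ∀ k, IsFreeTile n x (P k)) (c : Fin s → ℝ) (j : ℕ) :
    ∑ i ∈ Icc 1 j, Phi P c i j = ∑ k, ({i : ℕ | (i, j) ∈ P k}.ncard : ℝ) * c k := by
  classical
  unfold Phi
  rw [Finset.sum_comm]
  refine Finset.sum_congr rfl fun k _ => ?_
  have hset : {i : ℕ | (i, j) ∈ P k} = ↑((Icc 1 j).filter (fun i => (i, j) ∈ P k)) := by
    ext i
    simp only [Set.mem_setOf_eq, Finset.coe_filter, Finset.mem_Icc]
    constructor
    · intro h
      have hv := mem_tile_valid hP h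
      exact ⟨⟨hv.1, hv.2.1⟩, h⟩
    · exact fun h => h.2
  rw [hset, Set.ncard_coe_finset]
  rw [← Finset.sum_filter]
  rw [Finset.sum_const, nsmul_eq_mul]

end PhiLemmas

lemma diag_chain {n : ℕ} {x : ℕ → ℕ → ℝ} (hgt : IsGTPattern n x) {i j : ℕ}
    (hij : IdxP n i j) (hx0 : x i j = 0) :
    ∀ m, j + m ≤ n → SameTile n x (i, j) (i + m, j + m) ∧ x (i + m) (j + m) = 0 := by
  intro m
  induction m with
  | zero => intro _; exact ⟨Relation.ReflTransGen.refl, hx0⟩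
  | succ m ih =>
    intro h
    obtain ⟨hst, hzero⟩ := ih (by omega)
    have hv : IdxP n (i + m) (j + m) := sameTile_valid hij hst
    have hle := (hgt.2 (i + m) (j + m) hv.1 hv.2.1 (by omega)).2
    have hge : (0:ℝ) ≤ x (i + m + 1) (j + m + 1) := hgt.1 _ _ ⟨by omega, by omega, by omega⟩
    have hz2 : x (i + m + 1) (j + m + 1) = 0 := le_antisymm (hzero ▸ hle) hge
    refine ⟨Relation.ReflTransGen.tail hst ?_, hz2⟩
    exact ⟨hv, ⟨by omega, by omega, by omega⟩, Or.inl ⟨rfl, rfl⟩,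
      show x (i + m) (j + m) = x (i + m + 1) (j + m + 1) from by rw [hzero, hz2]⟩

lemma free_pos {n s : ℕ} {lam mu : ℕ → ℤ} {x : ℕ → ℕ → ℝ} {P : Fin s → Set (ℕ × ℕ)}
    (hx : GTMem n lam mu x) (hP : ∀ k, IsFreeTile n x (P k))
    {k : Fin s} {i j : ℕ} (hpk : (i, j) ∈ P k) : 0 < x i j := by
  have hv : IdxP n i j := mem_tile_valid hP hpk
  rcases lt_or_eq_of_le (hx.1.1 i j hv) with h | h
  · exact h
  · exfalso
    obtain ⟨hst, _⟩ := diag_chain hx.1 hv h.symm (n - j) (by omega)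
    have : (i + (n - j), n) ∈ P k := by
      have := mem_tile_closed hP hpk (by rw [show j + (n - j) = n from by omega] at hst; exact hst)
      exact this
    exact (hP k).2.2 (i + (n - j)) this

lemma perturb {n s : ℕ} {lam mu : ℕ → ℤ} {x : ℕ → ℕ → ℝ} {P : Fin s → Set (ℕ × ℕ)}
    (hx : GTMem n lam mu x) (hPfree : ∀ k, IsFreeTile n x (P k))
    (hPinj : Function.Injective P) (c : Fin s → ℝ)
    (hc : (tileMat n s P).mulVecLin c = 0) :
    ∃ ε > (0:ℝ), ∀ t : ℝ, |t| ≤ ε → GTMem n lam mu (fun i j => x i j + t * Phi P c i j) := by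
  classical
  set d := Phi P c with hdd
  have hdsupp : ∀ i j, d i j ≠ 0 → ∃ k, (i, j) ∈ P k := by
    intro i j h
    by_contra hn
    push_neg at hn
    exact h (phi_eq_zero hn)
  have hd11 : d 1 1 = 0 := phi_eq_zero (fun k => (hPfree k).2.1)
  have hdtop : ∀ i, d i n = 0 := fun i => phi_eq_zero (fun k => (hPfree k).2.2 i)
  have hdinv : ∀ i j, ¬ IdxP n i j → d i j = 0 := fun i j h =>
    phi_eq_zero (fun k hk => h (mem_tile_valid hPfree hk))
  have hdrow : ∀ j, 1 ≤ j → j ≤ n → ∑ i ∈ Icc 1 j, d i j = 0 := by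
    intro j h1 hn
    by_cases hjn : j = n
    · subst hjn
      exact Finset.sum_eq_zero fun i _ => hdtop i
    by_cases hj1 : j = 1
    · subst hj1
      simpa using hd11
    · have hj2 : 2 ≤ j := by omega
      have hjlt : j - 2 < n - 2 := by omega
      have hrow := congrFun hc ⟨j - 2, hjlt⟩
      rw [Matrix.mulVecLin_apply] at hrow
      simp only [Matrix.mulVec, dotProduct, tileMat, Pi.zero_apply] at hrow
      rw [show j - 2 + 2 = j from by omega] at hrow
      rw [hdd, sum_phi_row hPfree c j]
      exact hrow
  set M : ℝ := ∑ p ∈ Icc 1 n ×ˢ Icc 1 n, |d p.1 p.2| with hMM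
  have hM : ∀ i j, IdxP n i j → |d i j| ≤ M := by
    intro i j h
    have hmem : (i, j) ∈ Icc 1 n ×ˢ Icc 1 n := by
      simp only [Finset.mem_product, Finset.mem_Icc]
      omega
    exact Finset.single_le_sum (f := fun p : ℕ × ℕ => |d p.1 p.2|)
      (fun p _ => abs_nonneg _) hmem
  have hM0 : 0 ≤ M := Finset.sum_nonneg fun p _ => abs_nonneg _
  set G : Finset ℝ := insert 1
    (((((Icc 1 n ×ˢ Icc 1 n)) ×ˢ ((Icc 1 n ×ˢ Icc 1 n))).image
        fun pq : (ℕ × ℕ) × (ℕ × ℕ) =>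
          if x pq.1.1 pq.1.2 = x pq.2.1 pq.2.2 then 1 else |x pq.1.1 pq.1.2 - x pq.2.1 pq.2.2|) ∪
      ((Icc 1 n ×ˢ Icc 1 n).image fun p : ℕ × ℕ => if d p.1 p.2 = 0 then 1 else x p.1 p.2))
    with hGG
  have hGne : G.Nonempty := ⟨1, Finset.mem_insert_self _ _⟩
  set δ : ℝ := G.min' hGne with hδδ
  have hδpos : 0 < δ := by
    rw [hδδ, Finset.lt_min'_iff]
    intro b hb
    rw [hGG] at hb
    rcases Finset.mem_insert.1 hb with hb | hb
    · rw [hb]; norm_num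
    rcases Finset.mem_union.1 hb with hb | hb
    · obtain ⟨pq, _, rfl⟩ := Finset.mem_image.1 hb
      split
      · norm_num
      · next hne => exact abs_pos.2 (sub_ne_zero.2 hne)
    · obtain ⟨p, _, rfl⟩ := Finset.mem_image.1 hb
      split
      · norm_num
      · next hne =>
        obtain ⟨k, hk⟩ := hdsupp p.1 p.2 hne
        exact free_pos hx hPfree hk
  have hmemIcc : ∀ i j : ℕ, IdxP n i j → (i, j) ∈ Icc 1 n ×ˢ Icc 1 n := by
    intro i j h
    simp only [Finset.mem_product, Finset.mem_Icc]
    omega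
  have hδx : ∀ i j, d i j ≠ 0 → δ ≤ x i j := by
    intro i j h
    obtain ⟨k, hk⟩ := hdsupp i j h
    have hv : IdxP n i j := mem_tile_valid hPfree hk
    have hmem : x i j ∈ G := by
      rw [hGG]
      refine Finset.mem_insert_of_mem (Finset.mem_union_right _ ?_)
      exact Finset.mem_image.2 ⟨(i, j), hmemIcc i j hv, if_neg h⟩
    exact Finset.min'_le _ _ hmem
  have hδgap : ∀ i j i' j', IdxP n i j → IdxP n i' j' → x i j ≠ x i' j' →
      δ ≤ |x i j - x i' j'| := by
    intro i j i' j' hv hv' hne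
    have hmem : |x i j - x i' j'| ∈ G := by
      rw [hGG]
      refine Finset.mem_insert_of_mem (Finset.mem_union_left _ ?_)
      exact Finset.mem_image.2 ⟨((i, j), (i', j')),
        Finset.mem_product.2 ⟨hmemIcc i j hv, hmemIcc i' j' hv'⟩, if_neg hne⟩
    exact Finset.min'_le _ _ hmem
  refine ⟨δ / (2 * M + 1), div_pos hδpos (by linarith), ?_⟩
  intro t ht
  set ε : ℝ := δ / (2 * M + 1) with hεε
  have hε : 0 < ε := div_pos hδpos (by linarith)
  have hεδ : ε * (2 * M + 1) = δ := div_mul_cancel₀ _ (by linarith)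
  have hεM2 : ε * (2 * M) < δ := by nlinarith
  have hεM : ε * M < δ := by nlinarith
  have habs : ∀ i j, IdxP n i j → |t * d i j| ≤ ε * M := by
    intro i j h
    rw [abs_mul]
    exact mul_le_mul ht (hM i j h) (abs_nonneg _) (le_of_lt hε)
  refine ⟨⟨?_, ?_⟩, ?_, ?_, ?_⟩
  · -- nonneg
    intro i j hij
    show (0:ℝ) ≤ x i j + t * d i j
    by_cases hd : d i j = 0
    · rw [hd]
      have := hx.1.1 i j hij
      simpa using this
    · have h1 := hδx i j hd
      have h2 := habs i j hij
      have h3 := neg_abs_le (t * d i j)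
      linarith
  · -- inequalities
    intro i j h1 h2 h3
    constructor
    · show x i (j+1) + t * d i (j+1) ≥ x i j + t * d i j
      have hxle := (hx.1.2 i j h1 h2 h3).1
      by_cases he : x i j = x i (j+1)
      · have hstep : Step n x (i, j) (i, j+1) :=
          ⟨⟨h1, h2, by omega⟩, ⟨h1, by omega, h3⟩, Or.inr (Or.inl ⟨rfl, rfl⟩), he⟩
        have hd' : d i j = d i (j+1) := phi_step hPfree hPinj hstep
        rw [he, hd']
      · have hgap := hδgap i (j+1) i j ⟨h1, by omega, h3⟩ ⟨h1, h2, by omega⟩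
          (fun hh => he hh.symm)
        rw [abs_of_nonneg (by linarith : (0:ℝ) ≤ x i (j+1) - x i j)] at hgap
        have A := habs i (j+1) ⟨h1, by omega, h3⟩
        have B := habs i j ⟨h1, h2, by omega⟩
        have A' := neg_abs_le (t * d i (j+1))
        have B' := le_abs_self (t * d i j)
        linarith
    · show x i j + t * d i j ≥ x (i+1) (j+1) + t * d (i+1) (j+1)
      have hxle := (hx.1.2 i j h1 h2 h3).2
      by_cases he : x i j = x (i+1) (j+1)
      · have hstep : Step n x (i, j) (i+1, j+1) :=
          ⟨⟨h1, h2, by omega⟩, ⟨by omega, by omega, h3⟩, Or.inl ⟨rfl, rfl⟩, he⟩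
        have hd' : d i j = d (i+1) (j+1) := phi_step hPfree hPinj hstep
        rw [he, hd']
      · have hgap := hδgap i j (i+1) (j+1) ⟨h1, h2, by omega⟩ ⟨by omega, by omega, h3⟩ he
        rw [abs_of_nonneg (by linarith : (0:ℝ) ≤ x i j - x (i+1) (j+1))] at hgap
        have A := habs i j ⟨h1, h2, by omega⟩
        have B := habs (i+1) (j+1) ⟨by omega, by omega, h3⟩
        have A' := neg_abs_le (t * d i j)
        have B' := le_abs_self (t * d (i+1) (j+1))
        linarith
  · -- outside
    intro i j h
    have hd0 : d i j = 0 := hdinv i j h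
    show x i j + t * d i j = 0
    rw [hx.2.1 i j h, hd0]
    ring
  · -- top row
    intro i hi hin
    show x i n + t * d i n = (lam i : ℝ)
    rw [hdtop i, hx.2.2.1 i hi hin]
    ring
  · -- row sums
    intro j h1 hn
    show ∑ i ∈ Icc 1 j, (x i j + t * d i j) = _
    rw [Finset.sum_add_distrib, ← Finset.mul_sum, hdrow j h1 hn, hx.2.2.2 j h1 hn]
    ring

lemma phi_injective {n s : ℕ} {x : ℕ → ℕ → ℝ} {P : Fin s → Set (ℕ × ℕ)}
    (hPfree : ∀ k, IsFreeTile n x (P k)) (hPinj : Function.Injective P) :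
    Function.Injective (PhiL P : (Fin s → ℝ) →ₗ[ℝ] (ℕ → ℕ → ℝ)) := by
  intro c c' h
  funext k
  obtain ⟨p, hp, hPk⟩ := (hPfree k).1
  have hpm : (p.1, p.2) ∈ P k := by rw [hPk]; exact Relation.ReflTransGen.refl
  have h2 : Phi P c p.1 p.2 = Phi P c' p.1 p.2 := congrFun (congrFun h p.1) p.2
  rwa [phi_eq_of_mem hPfree hPinj hpm, phi_eq_of_mem hPfree hPinj hpm] at h2

lemma face_dir {n s : ℕ} {lam mu : ℕ → ℤ} {x : ℕ → ℕ → ℝ} {P : Fin s → Set (ℕ × ℕ)}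
    (hx : GTMem n lam mu x) (hPfree : ∀ k, IsFreeTile n x (P k))
    (hPinj : Function.Injective P) (hPall : ∀ T, IsFreeTile n x T → ∃ k, P k = T)
    {y : ℕ → ℕ → ℝ} (hy : y ∈ minFace {w | GTMem n lam mu w} x) :
    ∃ c : Fin s → ℝ, (tileMat n s P).mulVecLin c = 0 ∧
      Phi P c = fun i j => y i j - x i j := by
  classical
  rcases Set.mem_insert_iff.1 hy with rfl | ⟨hyS, z, hzS, hseg⟩
  · refine ⟨0, by simp, ?_⟩
    funext i j
    simp [Phi]
  · obtain ⟨a, b, ha, hb, hab, hsum⟩ := hseg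
    replace hyS : GTMem n lam mu y := hyS
    replace hzS : GTMem n lam mu z := hzS
    have hpt : ∀ i j, a * y i j + b * z i j = x i j := by
      intro i j
      have := congrFun (congrFun hsum i) j
      simpa using this
    have auxeq : ∀ {u1 u2 v1 v2 : ℝ}, u1 ≥ u2 → v1 ≥ v2 →
        a * u1 + b * v1 = a * u2 + b * v2 → u1 = u2 := by
      intro u1 u2 v1 v2 h1 h2 h3
      nlinarith
    have ystep : ∀ p q : ℕ × ℕ, Step n x p q →
        y p.1 p.2 - x p.1 p.2 = y q.1 q.2 - x q.1 q.2 := by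
      rintro ⟨p1, p2⟩ ⟨q1, q2⟩ ⟨hp, hq, hadj, hxeq⟩
      simp only at hp hq hxeq ⊢
      suffices hyeq : y p1 p2 = y q1 q2 by rw [hyeq, hxeq]
      rcases hadj with ⟨e1, e2⟩ | ⟨e1, e2⟩ | ⟨e1, e2⟩ | ⟨e1, e2⟩ <;> simp only at e1 e2
      · -- q = (p1+1, p2+1)
        rw [e1, e2] at hq hxeq ⊢
        have hyi := (hyS.1.2 p1 p2 hp.1 hp.2.1 hq.2.2).2
        have hzi := (hzS.1.2 p1 p2 hp.1 hp.2.1 hq.2.2).2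
        refine auxeq hyi hzi ?_
        rw [hpt p1 p2, hpt (p1+1) (p2+1)]
        exact hxeq
      · -- q = (p1, p2+1)
        rw [e1, e2] at hq hxeq ⊢
        have hyi := (hyS.1.2 p1 p2 hp.1 hp.2.1 hq.2.2).1
        have hzi := (hzS.1.2 p1 p2 hp.1 hp.2.1 hq.2.2).1
        refine (auxeq hyi hzi ?_).symm
        rw [hpt p1 (p2+1), hpt p1 p2]
        exact hxeq.symm
      · -- p = (q1+1, q2+1)
        rw [e1, e2] at hp hxeq ⊢
        have hyi := (hyS.1.2 q1 q2 hq.1 hq.2.1 hp.2.2).2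
        have hzi := (hzS.1.2 q1 q2 hq.1 hq.2.1 hp.2.2).2
        refine (auxeq hyi hzi ?_).symm
        rw [hpt q1 q2, hpt (q1+1) (q2+1)]
        exact hxeq.symm
      · -- p = (q1, q2+1)
        rw [e1, e2] at hp hxeq ⊢
        have hyi := (hyS.1.2 q1 q2 hq.1 hq.2.1 hp.2.2).1
        have hzi := (hzS.1.2 q1 q2 hq.1 hq.2.1 hp.2.2).1
        refine auxeq hyi hzi ?_
        rw [hpt q1 (q2+1), hpt q1 q2]
        exact hxeq
    have ysame : ∀ p q : ℕ × ℕ, SameTile n x p q →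
        y p.1 p.2 - x p.1 p.2 = y q.1 q.2 - x q.1 q.2 := by
      intro p q h
      induction h with
      | refl => rfl
      | tail _ hstep ih => exact ih.trans (ystep _ _ hstep)
    have hbase : ∀ k : Fin s, ∃ p : ℕ × ℕ, IdxP n p.1 p.2 ∧
        P k = {q | SameTile n x p q} := fun k => (hPfree k).1
    choose pk hpkv hpkP using hbase
    set c : Fin s → ℝ := fun k => y (pk k).1 (pk k).2 - x (pk k).1 (pk k).2 with hcc
    have hpk_mem : ∀ k, pk k ∈ P k := by
      intro k
      rw [hpkP k]
      exact Relation.ReflTransGen.refl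
    have hPhi : Phi P c = fun i j => y i j - x i j := by
      funext i j
      by_cases hk : ∃ k, (i, j) ∈ P k
      · obtain ⟨k, hk⟩ := hk
        rw [phi_eq_of_mem hPfree hPinj hk]
        have hsame : SameTile n x (pk k) (i, j) := by
          have h2 := hk
          rw [hpkP k] at h2
          exact h2
        have heq : y (pk k).1 (pk k).2 - x (pk k).1 (pk k).2 = y i j - x i j :=
          ysame _ _ hsame
        exact heq
      · push_neg at hk
        rw [phi_eq_zero hk]
        by_cases hv : IdxP n i j
        · have hT : IsTile n x {q | SameTile n x (i, j) q} := ⟨(i, j), hv, rfl⟩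
          have hnf : ¬ IsFreeTile n x {q | SameTile n x (i, j) q} := by
            intro hf
            obtain ⟨k, hkT⟩ := hPall _ hf
            refine hk k ?_
            rw [hkT]
            exact Relation.ReflTransGen.refl
          have hcase : ((1, 1) : ℕ × ℕ) ∈ {q | SameTile n x (i, j) q} ∨
              ∃ i', ((i', n) : ℕ × ℕ) ∈ {q | SameTile n x (i, j) q} := by
            by_contra hcon
            push_neg at hcon
            exact hnf ⟨hT, hcon.1, hcon.2⟩
          rcases hcase with h11 | ⟨i', htop⟩
          · have heq : y i j - x i j = y 1 1 - x 1 1 := ysame (i, j) (1, 1) h11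
            have hv11 : IdxP n 1 1 := sameTile_valid hv h11
            have hy11 := hyS.2.2.2 1 le_rfl hv11.2.2
            have hx11 := hx.2.2.2 1 le_rfl hv11.2.2
            simp only [Finset.Icc_self, Finset.sum_singleton] at hy11 hx11
            rw [heq, hy11, hx11]
            simp
          · have heq : y i j - x i j = y i' n - x i' n := ysame (i, j) (i', n) htop
            have hv' : IdxP n i' n := sameTile_valid hv htop
            have hy' := hyS.2.2.1 i' hv'.1 hv'.2.1
            have hx' := hx.2.2.1 i' hv'.1 hv'.2.1
            rw [heq, hy', hx']
            simp
        · rw [hyS.2.1 i j hv, hx.2.1 i j hv]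
          simp
    refine ⟨c, ?_, hPhi⟩
    funext j₀
    have hb2 : 1 ≤ j₀.1 + 2 := by omega
    have hbn : j₀.1 + 2 ≤ n := by have := j₀.isLt; omega
    have hsumrow : ∑ i ∈ Icc 1 (j₀.1 + 2), Phi P c i (j₀.1 + 2) = 0 := by
      rw [hPhi]
      rw [Finset.sum_sub_distrib, hyS.2.2.2 _ hb2 hbn, hx.2.2.2 _ hb2 hbn, sub_self]
    rw [sum_phi_row hPfree c (j₀.1 + 2)] at hsumrow
    show (tileMat n s P).mulVec c j₀ = 0
    simp only [Matrix.mulVec, dotProduct, tileMat]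
    exact hsumrow

/-- The dimension of the kernel of the tiling matrix of a GT-pattern `x` equals the dimension
of the minimal face of the GT-polytope `GT(λ,μ)` containing `x`. -/
theorem stmt4 (n s : ℕ) (lam mu : ℕ → ℤ) (x : ℕ → ℕ → ℝ)
    (hx : GTMem n lam mu x)
    (P : Fin s → Set (ℕ × ℕ))
    (hPfree : ∀ k, IsFreeTile n x (P k)) (hPinj : Function.Injective P)
    (hPall : ∀ T, IsFreeTile n x T → ∃ k, P k = T)
 :
    Module.finrank ℝ ↥(LinearMap.ker (tileMat n s P).mulVecLin) =
      Module.finrank ℝ ↥(vectorSpan ℝ (minFace {y | GTMem n lam mu y} x)) := by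
  have hWV : vectorSpan ℝ (minFace {y | GTMem n lam mu y} x) =
      Submodule.map (PhiL P) (LinearMap.ker (tileMat n s P).mulVecLin) := by
    apply le_antisymm
    · rw [vectorSpan_def]
      apply Submodule.span_le.2
      rintro v hv
      rw [Set.mem_vsub] at hv
      obtain ⟨y, hy, z, hz, rfl⟩ := hv
      obtain ⟨c1, hc1K, hc1⟩ := face_dir hx hPfree hPinj hPall hy
      obtain ⟨c2, hc2K, hc2⟩ := face_dir hx hPfree hPinj hPall hz
      refine Submodule.mem_map.2 ⟨c1 - c2, ?_, ?_⟩
      · exact sub_mem (LinearMap.mem_ker.2 hc1K) (LinearMap.mem_ker.2 hc2K)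
      · rw [map_sub]
        show Phi P c1 - Phi P c2 = y -ᵥ z
        rw [hc1, hc2, vsub_eq_sub]
        funext i j
        simp only [Pi.sub_apply]
        ring
    · rintro v hvmem
      obtain ⟨c, hcK, rfl⟩ := Submodule.mem_map.1 hvmem
      obtain ⟨ε, hε, hmem⟩ := perturb hx hPfree hPinj c (LinearMap.mem_ker.1 hcK)
      set y1 : ℕ → ℕ → ℝ := fun i j => x i j + ε * Phi P c i j with hy1d
      set y2 : ℕ → ℕ → ℝ := fun i j => x i j + (-ε) * Phi P c i j with hy2d
      have hy1S : GTMem n lam mu y1 := hmem ε (by rw [abs_of_pos hε])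
      have hy2S : GTMem n lam mu y2 := hmem (-ε) (by rw [abs_neg, abs_of_pos hε])
      have hmid : ∀ u v : ℕ → ℕ → ℝ, u = y1 → v = y2 →
          x ∈ openSegment ℝ u v := by
        rintro u v rfl rfl
        refine ⟨1/2, 1/2, by norm_num, by norm_num, by norm_num, ?_⟩
        funext i j
        simp only [Pi.add_apply, Pi.smul_apply, smul_eq_mul, hy1d, hy2d]
        ring
      have hseg12 : x ∈ openSegment ℝ y1 y2 := hmid _ _ rfl rfl
      have hseg21 : x ∈ openSegment ℝ y2 y1 := by
        rw [openSegment_symm]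
        exact hseg12
      have hy1F : y1 ∈ minFace {y | GTMem n lam mu y} x :=
        Set.mem_insert_of_mem _ ⟨hy1S, y2, hy2S, hseg12⟩
      have hy2F : y2 ∈ minFace {y | GTMem n lam mu y} x :=
        Set.mem_insert_of_mem _ ⟨hy2S, y1, hy1S, hseg21⟩
      have hsub : y1 -ᵥ y2 ∈ vectorSpan ℝ (minFace {y | GTMem n lam mu y} x) :=
        vsub_mem_vectorSpan ℝ hy1F hy2F
      have hrepr : (PhiL P) c = (1 / (2 * ε)) • (y1 -ᵥ y2) := by
        funext i j
        rw [vsub_eq_sub]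
        simp only [Pi.smul_apply, Pi.sub_apply, smul_eq_mul, hy1d, hy2d, phiL_apply]
        field_simp
        ring
      rw [hrepr]
      exact Submodule.smul_mem _ _ hsub
  rw [hWV]
  exact (Submodule.equivMapOfInjective (PhiL P) (phi_injective hPfree hPinj) _).finrank_eq
end

section
/- A GT-pattern x ∈ GT(λ,μ) with tiling 𝒫 is a vertex of GT(λ,μ) if and only if the tiling matrix A_𝒫 has trivial kernel, equivalently some s × s submatrix of A_𝒫 (where s is the number of free tiles) has nonzero determinant. -/
/-!
Free tiles carry positive entries, since a zero entry propagates along its diagonal up to the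
top row. Hence for `t ∈ ℝˢ` the pattern `d` equal to `t k` on `P k` and `0` elsewhere is a
direction in which `x` can move both ways: the inequalities tight at `x` hold along tiles, where
`d` is constant, the others are strict, and the row sums of `d` are the entries of `A_𝒫 t`,
so they vanish when `A_𝒫 t = 0`. Conversely, if `x` lies strictly between `y, z ∈ GT(λ,μ)`, every
inequality tight at `x` is tight at `y` and `z`, so `y - z` is constant on tiles, vanishes on
the non-free ones (they meet the fixed entries) and has zero row sums: `y - z = d` for some
`t ∈ ker A_𝒫`.
-/

open Filter Topology Matrix

namespace Matrix

theorem ker_mulVecLin_eq_bot_iff_exists_submatrix_det_ne_zero {m n K : Type*} [Fintype m]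
    [Fintype n] [DecidableEq n] [Field K] (A : Matrix m n K) :
    LinearMap.ker A.mulVecLin = ⊥ ↔
      ∃ rows : n → m, Function.Injective rows ∧ (A.submatrix rows id).det ≠ 0 := by
  constructor
  · intro hker
    have hrank : Module.finrank K (Submodule.span K (Set.range A.row)) = Fintype.card n := by
      rw [← rank_eq_finrank_span_row, rank, LinearMap.finrank_range_of_inj
        (LinearMap.ker_eq_bot.mp hker), Module.finrank_fintype_fun_eq_card]
    obtain ⟨κ, a, ha, hspan, hli⟩ := exists_linearIndependent' K A.row
    have : Fintype κ := @Fintype.ofFinite _ hli.finite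
    obtain ⟨e⟩ : Nonempty (n ≃ κ) := ⟨Fintype.equivOfCardEq <| by
      rw [← hrank, ← hspan, finrank_span_eq_card hli]⟩
    refine ⟨a ∘ e, ha.comp e.injective, ?_⟩
    rw [← isUnit_iff_ne_zero, ← isUnit_iff_isUnit_det, ← linearIndependent_rows_iff_isUnit]
    exact hli.comp e e.injective
  · rintro ⟨rows, -, hdet⟩
    rw [LinearMap.ker_eq_bot']
    intro v hv
    have hsub : (A.submatrix rows id) *ᵥ v = 0 := by
      ext i
      simpa [mulVec, dotProduct] using congrFun hv (rows i)
    exact (mulVec_injective_iff_isUnit.mpr ((isUnit_iff_isUnit_det _).mpr hdet.isUnit))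
      (hsub.trans (mulVec_zero _).symm)

end Matrix

theorem eq_and_eq_of_mul_add_mul_eq {𝕜 : Type*} [Field 𝕜] [LinearOrder 𝕜]
    [IsStrictOrderedRing 𝕜] {a b u u' v v' : 𝕜} (ha : 0 < a) (hb : 0 < b) (hu : u ≤ u')
    (hv : v ≤ v') (h : a * u + b * v = a * u' + b * v') : u = u' ∧ v = v' := by
  obtain ⟨hu', hv'⟩ := (add_eq_add_iff_eq_and_eq (mul_le_mul_of_nonneg_left hu ha.le)
    (mul_le_mul_of_nonneg_left hv hb.le)).mp h
  exact ⟨mul_left_cancel₀ ha.ne' hu', mul_left_cancel₀ hb.ne' hv'⟩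

theorem eq_zero_of_add_mem_of_sub_mem_of_mem_extremePoints {𝕜 E : Type*} [Field 𝕜]
    [LinearOrder 𝕜] [IsStrictOrderedRing 𝕜] [AddCommGroup E] [Module 𝕜 E] {A : Set E}
    {x v : E} (hx : x ∈ A.extremePoints 𝕜) (hadd : x + v ∈ A) (hsub : x - v ∈ A) : v = 0 := by
  have hseg : x ∈ openSegment 𝕜 (x + v) (x - v) :=
    ⟨1 / 2, 1 / 2, by norm_num, by norm_num, by norm_num, by
      rw [← smul_add, add_add_sub_cancel, ← two_smul 𝕜 x, smul_smul]; norm_num⟩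
  simpa using hx.2 hadd hsub hseg

theorem eventually_add_mul_le {a b e f : ℝ} (hab : a ≤ b) (hef : a = b → e = f) :
    ∀ᶠ η in 𝓝 0, a + η * e ≤ b + η * f := by
  rcases hab.lt_or_eq with hlt | rfl
  · refine (ContinuousAt.eventually_lt (by fun_prop) (by fun_prop) ?_).mono fun _ => le_of_lt
    simpa using hlt
  · simp [hef rfl]

theorem eventually_forall_idxP {α : Type*} {l : Filter α} {n : ℕ} {p : ℕ → ℕ → α → Prop}
    (h : ∀ i j, IdxP n i j → ∀ᶠ a in l, p i j a) :
    ∀ᶠ a in l, ∀ i j, IdxP n i j → p i j a := by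
  have : ∀ᶠ a in l, ∀ ij ∈ Finset.Icc 1 n ×ˢ Finset.Icc 1 n, IdxP n ij.1 ij.2 → p ij.1 ij.2 a :=
    (Filter.eventually_all_finset _).2 fun ij _ =>
      Filter.eventually_imp_distrib_left.2 (h ij.1 ij.2)
  refine this.mono fun a ha i j hij => ha (i, j) ?_ hij
  simp only [Finset.mem_product, Finset.mem_Icc]
  omega

section Tiles

variable {n : ℕ} {x : ℕ → ℕ → ℝ} {p q : ℕ × ℕ} {T T' : Set (ℕ × ℕ)}

theorem Adj.symm (h : Adj p q) : Adj q p := by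
  unfold Adj at *; tauto

theorem Step.symm (h : Step n x p q) : Step n x q p :=
  ⟨h.2.1, h.1, h.2.2.1.symm, h.2.2.2.symm⟩

theorem SameTile.symm (h : SameTile n x p q) : SameTile n x q p :=
  have : Std.Symm (Step n x) := ⟨fun _ _ => Step.symm⟩
  Std.Symm.symm (r := Relation.ReflTransGen (Step n x)) _ _ h

theorem SameTile.idxP (hp : IdxP n p.1 p.2) (h : SameTile n x p q) : IdxP n q.1 q.2 := by
  induction h with
  | refl => exact hp
  | tail _ hstep _ => exact hstep.2.1

theorem SameTile.eq_of_step {β : Type*} {f : ℕ → ℕ → β}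
    (hf : ∀ p q, Step n x p q → f p.1 p.2 = f q.1 q.2) (h : SameTile n x p q) :
    f p.1 p.2 = f q.1 q.2 := by
  induction h with
  | refl => rfl
  | tail _ hstep ih => exact ih.trans (hf _ _ hstep)

theorem IsTile.mem_of_sameTile (hT : IsTile n x T) (hp : p ∈ T) (h : SameTile n x p q) :
    q ∈ T := by
  obtain ⟨r, -, rfl⟩ := hT
  exact Relation.ReflTransGen.trans hp h

theorem IsTile.idxP (hT : IsTile n x T) (hq : q ∈ T) : IdxP n q.1 q.2 := by
  obtain ⟨r, hr, rfl⟩ := hT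
  exact SameTile.idxP hr hq

theorem IsTile.sameTile (hT : IsTile n x T) (hp : p ∈ T) (hq : q ∈ T) : SameTile n x p q := by
  obtain ⟨r, -, rfl⟩ := hT
  exact Relation.ReflTransGen.trans (SameTile.symm hp) hq

theorem IsTile.eq_of_mem (hT : IsTile n x T) (hT' : IsTile n x T') (hq : q ∈ T)
    (hq' : q ∈ T') : T = T' :=
  Set.ext fun _ => ⟨fun hu => hT'.mem_of_sameTile hq' (hT.sameTile hq hu),
    fun hu => hT.mem_of_sameTile hq (hT'.sameTile hq' hu)⟩

theorem sameTile_top_of_eq_zero (hx : IsGTPattern n x) {i j : ℕ} (hij : IdxP n i j)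
    (h0 : x i j = 0) : SameTile n x (i, j) (i + (n - j), n) := by
  obtain ⟨d, hd⟩ : ∃ d, n - j = d := ⟨_, rfl⟩
  induction d generalizing i j with
  | zero =>
    rw [hd, add_zero, show n = j by omega]
    exact Relation.ReflTransGen.refl
  | succ d ih =>
    have hj : j + 1 ≤ n := by omega
    have hnext : IdxP n (i + 1) (j + 1) := ⟨by omega, by omega, hj⟩
    have h0' : x (i + 1) (j + 1) = 0 :=
      le_antisymm (h0 ▸ (hx.2 i j hij.1 hij.2.1 hj).2) (hx.1 _ _ hnext)
    have hstep : Step n x (i, j) (i + 1, j + 1) :=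
      ⟨hij, hnext, Or.inl ⟨rfl, rfl⟩, h0.trans h0'.symm⟩
    have := ih hnext h0' (by omega)
    rw [show i + (n - j) = i + 1 + (n - (j + 1)) by omega]
    exact Relation.ReflTransGen.head hstep this

theorem IsFreeTile.pos (hx : IsGTPattern n x) (hT : IsFreeTile n x T) {i j : ℕ}
    (hij : (i, j) ∈ T) : 0 < x i j := by
  have hidx := hT.1.idxP hij
  refine (hx.1 i j hidx).lt_of_ne fun h0 => hT.2.2 (i + (n - j)) ?_
  exact hT.1.mem_of_sameTile hij (sameTile_top_of_eq_zero hx hidx h0.symm)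

theorem Step.eq_of_mem_openSegment {y z : ℕ → ℕ → ℝ} (hy : IsGTPattern n y)
    (hz : IsGTPattern n z) (hxyz : x ∈ openSegment ℝ y z) (h : Step n x p q) :
    y p.1 p.2 = y q.1 q.2 ∧ z p.1 p.2 = z q.1 q.2 := by
  obtain ⟨a, b, ha, hb, -, rfl⟩ := hxyz
  obtain ⟨i, j⟩ := p
  obtain ⟨i', j'⟩ := q
  obtain ⟨hp, hq, hadj, hval⟩ := h
  simp only [Adj] at hadj
  simp only [Pi.add_apply, Pi.smul_apply, smul_eq_mul] at hp hq hval ⊢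
  -- each adjacency is one of the interlacing inequalities, oriented the same way for `y` and `z`
  rcases hadj with ⟨rfl, rfl⟩ | ⟨rfl, rfl⟩ | ⟨rfl, rfl⟩ | ⟨rfl, rfl⟩
  · have hyi := (hy.2 _ _ hp.1 hp.2.1 hq.2.2).2
    have hzi := (hz.2 _ _ hp.1 hp.2.1 hq.2.2).2
    exact (eq_and_eq_of_mul_add_mul_eq ha hb hyi hzi hval.symm).imp Eq.symm Eq.symm
  · exact eq_and_eq_of_mul_add_mul_eq ha hb (hy.2 _ _ hp.1 hp.2.1 hq.2.2).1
      (hz.2 _ _ hp.1 hp.2.1 hq.2.2).1 hval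
  · exact eq_and_eq_of_mul_add_mul_eq ha hb (hy.2 _ _ hq.1 hq.2.1 hp.2.2).2
      (hz.2 _ _ hq.1 hq.2.1 hp.2.2).2 hval
  · have hyi := (hy.2 _ _ hq.1 hq.2.1 hp.2.2).1
    have hzi := (hz.2 _ _ hq.1 hq.2.1 hp.2.2).1
    exact (eq_and_eq_of_mul_add_mul_eq ha hb hyi hzi hval.symm).imp Eq.symm Eq.symm

end Tiles

noncomputable def tileVec {s : ℕ} (P : Fin s → Set (ℕ × ℕ)) (t : Fin s → ℝ) : ℕ → ℕ → ℝ :=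
  fun i j => ∑ k, (P k).indicator (fun _ => t k) (i, j)

section TileVec

variable {n s : ℕ} {x : ℕ → ℕ → ℝ} {P : Fin s → Set (ℕ × ℕ)} {t : Fin s → ℝ} {i j : ℕ}

theorem tileVec_of_mem (hP : ∀ k, IsTile n x (P k)) (hPinj : Function.Injective P) {k : Fin s}
    (h : (i, j) ∈ P k) : tileVec P t i j = t k := by
  refine (Finset.sum_eq_single k (fun k' _ hk' => ?_) (by simp)).trans (by simp [h])
  exact Set.indicator_of_notMem (fun h' => hk' (hPinj ((hP k').eq_of_mem (hP k) h' h))) _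

theorem tileVec_of_forall_notMem (h : ∀ k, (i, j) ∉ P k) : tileVec P t i j = 0 :=
  Finset.sum_eq_zero fun k _ => Set.indicator_of_notMem (h k) _

theorem tileVec_eq_of_sameTile (hP : ∀ k, IsTile n x (P k)) (hPinj : Function.Injective P)
    {p q : ℕ × ℕ} (h : SameTile n x p q) : tileVec P t p.1 p.2 = tileVec P t q.1 q.2 := by
  by_cases hp : ∃ k, p ∈ P k
  · obtain ⟨k, hk⟩ := hp
    rw [tileVec_of_mem hP hPinj hk, tileVec_of_mem hP hPinj ((hP k).mem_of_sameTile hk h)]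
  · push Not at hp
    rw [tileVec_of_forall_notMem hp,
      tileVec_of_forall_notMem fun k hq => hp k ((hP k).mem_of_sameTile hq h.symm)]

theorem tileVec_eq_zero_of_eq_zero (hx : IsGTPattern n x) (hP : ∀ k, IsFreeTile n x (P k))
    (h : x i j = 0) : tileVec P t i j = 0 :=
  tileVec_of_forall_notMem fun k hk => ((hP k).pos hx hk).ne' h

theorem eq_zero_of_tileVec_eq_zero (hP : ∀ k, IsTile n x (P k)) (hPinj : Function.Injective P)
    (h : tileVec P t = 0) : t = 0 := by
  funext k
  obtain ⟨p, -, hPk⟩ := hP k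
  have hp : p ∈ P k := hPk ▸ Relation.ReflTransGen.refl
  rw [← tileVec_of_mem (t := t) hP hPinj hp, h]
  rfl

theorem sum_tileVec_eq_tileMat_mulVec (hP : ∀ k, IsTile n x (P k)) (j : Fin (n - 2)) :
    ∑ i ∈ Finset.Icc 1 ((j : ℕ) + 2), tileVec P t i (j + 2) = (tileMat n s P *ᵥ t) j := by
  classical
  simp only [tileVec, Matrix.mulVec, dotProduct, tileMat]
  rw [Finset.sum_comm]
  refine Finset.sum_congr rfl fun k _ => ?_
  have hrow : {i | (i, (j : ℕ) + 2) ∈ P k} =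
      ↑((Finset.Icc 1 ((j : ℕ) + 2)).filter fun i => (i, (j : ℕ) + 2) ∈ P k) := by
    ext i
    simp only [Set.mem_ofPred_eq, Finset.coe_filter, Finset.mem_Icc, iff_and_self]
    exact fun h => ⟨((hP k).idxP h).1, ((hP k).idxP h).2.1⟩
  rw [hrow, Set.ncard_coe_finset]
  simp [Set.indicator_apply, Finset.sum_ite, Finset.sum_const]

theorem tileMat_mulVec_eq_zero_iff (hP : ∀ k, IsFreeTile n x (P k)) :
    tileMat n s P *ᵥ t = 0 ↔ ∀ j, 1 ≤ j → j ≤ n → ∑ i ∈ Finset.Icc 1 j, tileVec P t i j = 0 := by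
  constructor
  · intro ht j hj1 hjn
    rcases (by omega : j = 1 ∨ j = n ∨ 2 ≤ j ∧ j < n) with rfl | rfl | ⟨hj2, hjn'⟩
    · simp [tileVec_of_forall_notMem fun k => (hP k).2.1]
    · exact Finset.sum_eq_zero fun i _ => tileVec_of_forall_notMem fun k => (hP k).2.2 i
    · obtain ⟨j, rfl⟩ : ∃ j₀, j = j₀ + 2 := ⟨j - 2, by omega⟩
      rw [sum_tileVec_eq_tileMat_mulVec (fun k => (hP k).1) ⟨j, by omega⟩, ht]
      rfl
  · intro h
    funext j
    rw [← sum_tileVec_eq_tileMat_mulVec fun k => (hP k).1]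
    exact h _ (by omega) (by omega)

end TileVec

section Vertex

variable {n s : ℕ} {lam mu : ℕ → ℤ} {x : ℕ → ℕ → ℝ} {P : Fin s → Set (ℕ × ℕ)}

/-- Every inequality tight at `x` stays tight along `d`, the others survive small moves. -/
theorem IsGTPattern.eventually_add_smul (hx : IsGTPattern n x) {d : ℕ → ℕ → ℝ}
    (hstep : ∀ p q, Step n x p q → d p.1 p.2 = d q.1 q.2) (hzero : ∀ i j, x i j = 0 → d i j = 0) :
    ∀ᶠ η in 𝓝 (0 : ℝ), IsGTPattern n (x + η • d) := by
  have hnonneg : ∀ᶠ η in 𝓝 (0 : ℝ), ∀ i j, IdxP n i j → 0 ≤ x i j + η * d i j :=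
    eventually_forall_idxP fun i j hij => by
      simpa using eventually_add_mul_le (hx.1 i j hij) fun h => (hzero i j h.symm).symm
  have hinterlace : ∀ᶠ η in 𝓝 (0 : ℝ), ∀ i j, IdxP n i j → j + 1 ≤ n →
      x i j + η * d i j ≤ x i (j + 1) + η * d i (j + 1) ∧
        x (i + 1) (j + 1) + η * d (i + 1) (j + 1) ≤ x i j + η * d i j := by
    refine eventually_forall_idxP fun i j hij => Filter.eventually_imp_distrib_left.2 fun hj => ?_
    obtain ⟨hvert, hdiag⟩ := hx.2 i j hij.1 hij.2.1 hj
    have hij' : IdxP n i (j + 1) := ⟨hij.1, by omega, hj⟩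
    have hdiag' : IdxP n (i + 1) (j + 1) := ⟨by omega, by omega, hj⟩
    exact (eventually_add_mul_le hvert fun h =>
        hstep (i, j) (i, j + 1) ⟨hij, hij', Or.inr (Or.inl ⟨rfl, rfl⟩), h⟩).and
      (eventually_add_mul_le hdiag fun h =>
        (hstep (i, j) (i + 1, j + 1) ⟨hij, hdiag', Or.inl ⟨rfl, rfl⟩, h.symm⟩).symm)
  filter_upwards [hnonneg, hinterlace] with η hη₁ hη₂
  exact ⟨hη₁, fun i j hi hij hj => hη₂ i j ⟨hi, hij, by omega⟩ hj⟩

theorem GTMem.eventually_add_smul_tileVec (hx : GTMem n lam mu x)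
    (hP : ∀ k, IsFreeTile n x (P k)) (hPinj : Function.Injective P) {t : Fin s → ℝ}
    (ht : tileMat n s P *ᵥ t = 0) :
    ∀ᶠ η in 𝓝 (0 : ℝ), GTMem n lam mu (x + η • tileVec P t) := by
  obtain ⟨hgt, hout, htop, hrow⟩ := hx
  have hdzero : ∀ i j, x i j = 0 → tileVec P t i j = 0 := fun _ _ =>
    tileVec_eq_zero_of_eq_zero hgt hP
  have hdrow := (tileMat_mulVec_eq_zero_iff hP).1 ht
  filter_upwards [hgt.eventually_add_smul (fun p q h => tileVec_eq_of_sameTile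
    (fun k => (hP k).1) hPinj (Relation.ReflTransGen.single h)) hdzero] with η hη
  refine ⟨hη, fun i j hij => ?_, fun i hi hin => ?_, fun j hj hjn => ?_⟩ <;>
    simp only [Pi.add_apply, Pi.smul_apply, smul_eq_mul]
  · simp [hout i j hij, hdzero i j (hout i j hij)]
  · simp [htop i hi hin, tileVec_of_forall_notMem fun k => (hP k).2.2 i]
  · rw [Finset.sum_add_distrib, ← Finset.mul_sum, hdrow j hj hjn, mul_zero, add_zero,
      hrow j hj hjn]

theorem ker_tileMat_eq_bot_of_mem_extremePoints
    (hext : x ∈ Set.extremePoints ℝ {y | GTMem n lam mu y})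
    (hP : ∀ k, IsFreeTile n x (P k)) (hPinj : Function.Injective P) :
    LinearMap.ker (tileMat n s P).mulVecLin = ⊥ := by
  refine LinearMap.ker_eq_bot'.2 fun t ht => ?_
  obtain ⟨ε, hε, hball⟩ := Metric.eventually_nhds_iff.1
    ((show GTMem n lam mu x from hext.1).eventually_add_smul_tileVec hP hPinj ht)
  have hmem : ∀ η : ℝ, |η| < ε → x + η • tileVec P t ∈ {y | GTMem n lam mu y} :=
    fun η hη => hball (by rwa [Real.dist_eq, sub_zero])
  have hhalf : |ε / 2| < ε := by rw [abs_of_pos (half_pos hε)]; exact half_lt_self hε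
  have hzero := eq_zero_of_add_mem_of_sub_mem_of_mem_extremePoints hext (hmem _ hhalf)
    (by simpa [neg_smul, ← sub_eq_add_neg] using hmem (-(ε / 2)) (by rwa [abs_neg]))
  exact eq_zero_of_tileVec_eq_zero (fun k => (hP k).1) hPinj
    ((smul_eq_zero.1 hzero).resolve_left (half_pos hε).ne')

theorem exists_tileMat_mulVec_eq_zero_and_eq_tileVec (hP : ∀ k, IsFreeTile n x (P k))
    (hPinj : Function.Injective P) (hPall : ∀ T, IsFreeTile n x T → ∃ k, P k = T)
    {w : ℕ → ℕ → ℝ} (htile : ∀ p q, SameTile n x p q → w p.1 p.2 = w q.1 q.2)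
    (hout : ∀ i j, ¬ IdxP n i j → w i j = 0) (htop : ∀ i, 1 ≤ i → i ≤ n → w i n = 0)
    (hrow : ∀ j, 1 ≤ j → j ≤ n → ∑ i ∈ Finset.Icc 1 j, w i j = 0) :
    ∃ t, tileMat n s P *ᵥ t = 0 ∧ w = tileVec P t := by
  choose p hp using fun k => (hP k).1
  have hw : w = tileVec P (fun k => w (p k).1 (p k).2) := by
    funext i j
    by_cases hk : ∃ k, (i, j) ∈ P k
    · obtain ⟨k, hk⟩ := hk
      rw [tileVec_of_mem (fun k => (hP k).1) hPinj hk]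
      exact (htile (p k) (i, j) ((Set.ext_iff.1 (hp k).2 _).1 hk)).symm
    push Not at hk
    rw [tileVec_of_forall_notMem hk]
    by_cases hij : IdxP n i j
    swap
    · exact hout i j hij
    -- the tile of `(i, j)` is not free, so it reaches `(1, 1)` or the top row, where `w` vanishes
    have hnfree : ¬ IsFreeTile n x {q | SameTile n x (i, j) q} := fun hfree =>
      let ⟨k, hk'⟩ := hPall _ hfree
      hk k (hk' ▸ Relation.ReflTransGen.refl)
    simp only [IsFreeTile, not_and_or, not_not, not_forall] at hnfree
    rcases hnfree with hnt | h11 | ⟨i', hi'⟩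
    · exact absurd ⟨(i, j), hij, rfl⟩ hnt
    · have h1n : 1 ≤ n := (SameTile.idxP hij h11).2.2
      simpa [htile _ _ h11] using hrow 1 le_rfl h1n
    · have hi'n := SameTile.idxP hij hi'
      rw [htile _ _ hi']
      exact htop i' hi'n.1 hi'n.2.1
  refine ⟨_, (tileMat_mulVec_eq_zero_iff hP).2 fun j hj hjn => ?_, hw⟩
  rw [← hw]
  exact hrow j hj hjn

theorem mem_extremePoints_of_ker_tileMat_eq_bot (hx : GTMem n lam mu x)
    (hP : ∀ k, IsFreeTile n x (P k)) (hPinj : Function.Injective P)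
    (hPall : ∀ T, IsFreeTile n x T → ∃ k, P k = T)
    (hker : LinearMap.ker (tileMat n s P).mulVecLin = ⊥) :
    x ∈ Set.extremePoints ℝ {y | GTMem n lam mu y} := by
  refine ⟨hx, fun y hy z hz hxyz => ?_⟩
  obtain ⟨t, ht, hyz⟩ := exists_tileMat_mulVec_eq_zero_and_eq_tileVec hP hPinj hPall (w := y - z)
    (fun p q h => h.eq_of_step fun p q hs => by
      obtain ⟨hys, hzs⟩ := hs.eq_of_mem_openSegment hy.1 hz.1 hxyz
      simp [hys, hzs])
    (fun i j hij => by simp [hy.2.1 i j hij, hz.2.1 i j hij])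
    (fun i hi hin => by simp [hy.2.2.1 i hi hin, hz.2.2.1 i hi hin])
    (fun j hj hjn => by simp [Finset.sum_sub_distrib, hy.2.2.2 j hj hjn, hz.2.2.2 j hj hjn])
  have ht0 : t = 0 := by
    simpa [hker] using (LinearMap.mem_ker.2 ht : t ∈ LinearMap.ker (tileMat n s P).mulVecLin)
  obtain rfl : y = z := sub_eq_zero.1 (hyz.trans (by ext; simp [ht0, tileVec]))
  rw [openSegment_same, Set.mem_singleton_iff] at hxyz
  exact hxyz.symm

end Vertex

/-- A GT-pattern `x ∈ GT(λ,μ)` is a vertex iff its tiling matrix has trivial kernel, iff some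
`s × s` submatrix of the tiling matrix has nonzero determinant. -/
theorem stmt5 (n s : ℕ) (lam mu : ℕ → ℤ) (x : ℕ → ℕ → ℝ)
    (hx : GTMem n lam mu x)
    (P : Fin s → Set (ℕ × ℕ))
    (hPfree : ∀ k, IsFreeTile n x (P k)) (hPinj : Function.Injective P)
    (hPall : ∀ T, IsFreeTile n x T → ∃ k, P k = T)
 :
    (x ∈ Set.extremePoints ℝ {y | GTMem n lam mu y} ↔
      LinearMap.ker (tileMat n s P).mulVecLin = ⊥) ∧
    (LinearMap.ker (tileMat n s P).mulVecLin = ⊥ ↔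
      ∃ rows : Fin s → Fin (n - 2), Function.Injective rows ∧
        ((tileMat n s P).submatrix rows id).det ≠ 0) :=
  ⟨⟨fun hext => ker_tileMat_eq_bot_of_mem_extremePoints hext hPfree hPinj,
    mem_extremePoints_of_ker_tileMat_eq_bot hx hPfree hPinj hPall⟩,
    Matrix.ker_mulVecLin_eq_bot_iff_exists_submatrix_det_ne_zero _⟩
end

section
/- Let x ∈ GT(λ,μ) have tiling 𝒫, and suppose y ∈ X_n satisfies x + y ∈ GT(λ,μ) and x − y ∈ GT(λ,μ). Then: (a) y_{ij} = 0 whenever (i,j) is not in a free tile of 𝒫; (b) every row sum of y is 0; (c) if (i1,j1) and (i2,j2) lie in the same free tile of 𝒫, then y_{i1,j1} = y_{i2,j2}. -/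
lemma step_y_eq (n : ℕ) (lam mu : ℕ → ℤ) (x y : ℕ → ℕ → ℝ)
    (hplus : GTMem n lam mu (fun i j => x i j + y i j))
    (hminus : GTMem n lam mu (fun i j => x i j - y i j))
    {p q : ℕ × ℕ} (h : Step n x p q) : y p.1 p.2 = y q.1 q.2 := by
  obtain ⟨⟨hp1, hp2, hp3⟩, ⟨hq1, hq2, hq3⟩, hadj, heq⟩ := h
  have hP := hplus.1.2
  have hM := hminus.1.2
  simp only at hP hM
  rcases hadj with ⟨h1, h2⟩ | ⟨h1, h2⟩ | ⟨h1, h2⟩ | ⟨h1, h2⟩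
  · have hPi := (hP p.1 p.2 hp1 hp2 (by omega)).2
    have hMi := (hM p.1 p.2 hp1 hp2 (by omega)).2
    rw [h1, h2] at heq ⊢
    linarith
  · have hPi := (hP p.1 p.2 hp1 hp2 (by omega)).1
    have hMi := (hM p.1 p.2 hp1 hp2 (by omega)).1
    rw [h1, h2] at heq ⊢
    linarith
  · have hPi := (hP q.1 q.2 hq1 hq2 (by omega)).2
    have hMi := (hM q.1 q.2 hq1 hq2 (by omega)).2
    rw [h1, h2] at heq ⊢
    linarith
  · have hPi := (hP q.1 q.2 hq1 hq2 (by omega)).1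
    have hMi := (hM q.1 q.2 hq1 hq2 (by omega)).1
    rw [h1, h2] at heq ⊢
    linarith

lemma sametile_y_eq (n : ℕ) (lam mu : ℕ → ℤ) (x y : ℕ → ℕ → ℝ)
    (hplus : GTMem n lam mu (fun i j => x i j + y i j))
    (hminus : GTMem n lam mu (fun i j => x i j - y i j))
    {p q : ℕ × ℕ} (h : SameTile n x p q) : y p.1 p.2 = y q.1 q.2 := by
  induction h with
  | refl => rfl
  | tail _ hstep ih => exact ih.trans (step_y_eq n lam mu x y hplus hminus hstep)

lemma sametile_valid (n : ℕ) (x : ℕ → ℕ → ℝ) {p q : ℕ × ℕ}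
    (h : SameTile n x p q) (hp : IdxP n p.1 p.2) : IdxP n q.1 q.2 := by
  induction h with
  | refl => exact hp
  | tail _ hstep _ => exact hstep.2.1

/-- If `x ± y ∈ GT(λ,μ)` then: (a) `y` vanishes off the free tiles of `x`; (b) every row sum of
`y` is `0`; (c) `y` is constant on each free tile of `x`. -/
theorem stmt7 (n : ℕ) (lam mu : ℕ → ℤ) (x y : ℕ → ℕ → ℝ)
    (hx : GTMem n lam mu x)
    (hplus : GTMem n lam mu (fun i j => x i j + y i j))
    (hminus : GTMem n lam mu (fun i j => x i j - y i j)) :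
    (∀ i j : ℕ, (¬ ∃ T, IsFreeTile n x T ∧ ((i, j) : ℕ × ℕ) ∈ T) → y i j = 0) ∧
    (∀ j, 1 ≤ j → j ≤ n → ∑ i ∈ Finset.Icc 1 j, y i j = 0) ∧
    (∀ (T : Set (ℕ × ℕ)) (p q : ℕ × ℕ), IsFreeTile n x T → p ∈ T → q ∈ T →
      y p.1 p.2 = y q.1 q.2) := by
  have rowsum : ∀ j, 1 ≤ j → j ≤ n → ∑ i ∈ Finset.Icc 1 j, y i j = 0 := by
    intro j hj1 hj2
    have h1 := hplus.2.2.2 j hj1 hj2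
    have h2 := hx.2.2.2 j hj1 hj2
    simp only [Finset.sum_add_distrib] at h1
    linarith
  refine ⟨?_, rowsum, ?_⟩
  · intro i j hnot
    by_cases hij : IdxP n i j
    · push_neg at hnot
      have hmem : ((i, j) : ℕ × ℕ) ∈ {q | SameTile n x (i, j) q} :=
        Relation.ReflTransGen.refl
      have hnf := hnot {q | SameTile n x (i, j) q}
      have htile : IsTile n x {q | SameTile n x (i, j) q} := ⟨(i, j), hij, rfl⟩
      by_cases h11 : ((1, 1) : ℕ × ℕ) ∈ {q | SameTile n x (i, j) q}
      · have hy := sametile_y_eq n lam mu x y hplus hminus h11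
        have h0 := rowsum 1 le_rfl (by omega)
        simp [Finset.Icc_self] at h0
        simpa [h0] using hy
      · have : ¬ ∀ k, ((k, n) : ℕ × ℕ) ∉ {q | SameTile n x (i, j) q} := by
          intro hall
          exact hnf ⟨htile, h11, hall⟩ hmem
        push_neg at this
        obtain ⟨k, hk⟩ := this
        have hy := sametile_y_eq n lam mu x y hplus hminus hk
        have hkv := sametile_valid n x hk hij
        have e1 := hplus.2.2.1 k hkv.1 (le_trans hkv.2.1 hkv.2.2)
        have e2 := hx.2.2.1 k hkv.1 (le_trans hkv.2.1 hkv.2.2)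
        simp only at e1
        rw [hy]
        linarith
    · have e1 := hplus.2.1 i j hij
      have e2 := hx.2.1 i j hij
      simp only at e1
      linarith
  · rintro T p q ⟨⟨p0, hp0, rfl⟩, -, -⟩ hp hq
    have h1 := sametile_y_eq n lam mu x y hplus hminus hp
    have h2 := sametile_y_eq n lam mu x y hplus hminus hq
    linarith
end

section
/- If y and x are GT-patterns in the same GT-polytope, with x ± y' ∈ GT(λ,μ) for y' = y − x scaled appropriately, and if positions (i1,j1), (i2,j2) are adjacent and lie in the same tile of x (so x_{i1,j1} = x_{i2,j2}), then y'_{i1,j1} = y'_{i2,j2}. -/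
/-- If `x + y'` and `x - y'` both lie in `GT(λ,μ)`, and positions `p, q` are adjacent and lie in
the same tile of `x` (so the entries of `x` there are equal), then `y'` takes equal values at
`p` and `q`. -/
theorem stmt8 (n : ℕ) (lam mu : ℕ → ℤ) (x y' : ℕ → ℕ → ℝ)
    (hplus : GTMem n lam mu (fun i j => x i j + y' i j))
    (hminus : GTMem n lam mu (fun i j => x i j - y' i j))
    (p q : ℕ × ℕ) (hadj : Adj p q) (htile : SameTile n x p q) :
    y' p.1 p.2 = y' q.1 q.2 := by
  obtain ⟨⟨_, hp⟩, _⟩ := hplus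
  obtain ⟨⟨_, hm⟩, _⟩ := hminus
  have key : p = q ∨ (IdxP n p.1 p.2 ∧ IdxP n q.1 q.2 ∧ x p.1 p.2 = x q.1 q.2) := by
    clear hadj
    induction htile with
    | refl => exact Or.inl rfl
    | tail h1 h2 ih =>
      obtain ⟨hb1, hb2, _, hxeq⟩ := h2
      rcases ih with rfl | ⟨hip, _, hx⟩
      · exact Or.inr ⟨hb1, hb2, hxeq⟩
      · exact Or.inr ⟨hip, hb2, hx.trans hxeq⟩
  rcases key with rfl | ⟨hip, hiq, hx⟩
  · exfalso
    rcases hadj with ⟨h1, h2⟩ | ⟨h1, h2⟩ | ⟨h1, h2⟩ | ⟨h1, h2⟩ <;> omega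
  obtain ⟨hp1, hp2, hp3⟩ := hip
  obtain ⟨hq1, hq2, hq3⟩ := hiq
  rcases hadj with ⟨h1, h2⟩ | ⟨h1, h2⟩ | ⟨h1, h2⟩ | ⟨h1, h2⟩
  · have H1 := (hp p.1 p.2 hp1 (by omega) (by omega)).2
    have H2 := (hm p.1 p.2 hp1 (by omega) (by omega)).2
    rw [h1, h2] at hx ⊢
    simp only at H1 H2
    linarith
  · have H1 := (hp p.1 p.2 hp1 (by omega) (by omega)).1
    have H2 := (hm p.1 p.2 hp1 (by omega) (by omega)).1
    rw [h1, h2] at hx ⊢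
    simp only at H1 H2
    linarith
  · have H1 := (hp q.1 q.2 hq1 (by omega) (by omega)).2
    have H2 := (hm q.1 q.2 hq1 (by omega) (by omega)).2
    rw [h1, h2] at hx ⊢
    simp only at H1 H2
    linarith
  · have H1 := (hp q.1 q.2 hq1 (by omega) (by omega)).1
    have H2 := (hm q.1 q.2 hq1 (by omega) (by omega)).1
    rw [h1, h2] at hx ⊢
    simp only at H1 H2
    linarith
end

section
/- In any tiling matrix A_𝒫 of a GT-pattern, the first and last nonzero entries of each column equal 1. In particular, for n = 4, every tiling matrix with trivial kernel is a 0/1-matrix. -/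
/-- The tiling matrix over `ℕ`. -/
noncomputable def tileMatN (n s : ℕ) (P : Fin s → Set (ℕ × ℕ)) :
    Matrix (Fin (n - 2)) (Fin s) ℕ :=
  fun j k => {i : ℕ | (i, j.1 + 2) ∈ P k}.ncard

/-- In any tiling matrix of a GT-pattern, the first and last nonzero entries of each column
equal `1`; in particular for `n = 4` every tiling matrix with trivial kernel is a 0/1-matrix. -/
theorem stmt10 (n s : ℕ) (x : ℕ → ℕ → ℝ) (hx : IsGTPattern n x)
    (P : Fin s → Set (ℕ × ℕ))
    (hPfree : ∀ k, IsFreeTile n x (P k)) (hPinj : Function.Injective P)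
    (hPall : ∀ T, IsFreeTile n x T → ∃ k, P k = T)
 :
    (∀ (k : Fin s) (j : Fin (n - 2)), tileMatN n s P j k ≠ 0 →
      (∀ j' : Fin (n - 2), j' < j → tileMatN n s P j' k = 0) → tileMatN n s P j k = 1) ∧
    (∀ (k : Fin s) (j : Fin (n - 2)), tileMatN n s P j k ≠ 0 →
      (∀ j' : Fin (n - 2), j < j' → tileMatN n s P j' k = 0) → tileMatN n s P j k = 1) ∧
    (n = 4 →
      LinearMap.ker ((tileMatN n s P).map (fun m => (m : ℝ))).mulVecLin = ⊥ →
      ∀ (j : Fin (n - 2)) (k : Fin s), tileMatN n s P j k = 0 ∨ tileMatN n s P j k = 1) := by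
  obtain ⟨hpos, hineq⟩ := hx
  -- each row is weakly decreasing
  have hstep : ∀ i r, 1 ≤ i → i + 1 ≤ r → r ≤ n → x (i+1) r ≤ x i r := by
    intro i r hi hir hrn
    obtain ⟨j0, rfl⟩ : ∃ j0, r = j0 + 1 := ⟨r - 1, by omega⟩
    obtain ⟨h1, h2⟩ := hineq i j0 hi (by omega) hrn
    exact le_trans h2 h1
  have hmono : ∀ a b r, 1 ≤ a → a ≤ b → b ≤ r → r ≤ n → x b r ≤ x a r := by
    intro a b r ha hab
    induction b, hab using Nat.le_induction with
    | base => intro _ _; exact le_refl _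
    | succ b hb ih =>
      intro hbr hrn
      exact (hstep b r (by omega) (by omega) hrn).trans (ih (by omega) hrn)
  -- values are constant on tiles
  have hval : ∀ p q : ℕ × ℕ, SameTile n x p q → x p.1 p.2 = x q.1 q.2 := by
    intro p q h
    induction h with
    | refl => rfl
    | tail _ h2 ih => exact ih.trans h2.2.2.2
  have hvalid : ∀ p q : ℕ × ℕ, IdxP n p.1 p.2 → SameTile n x p q → IdxP n q.1 q.2 := by
    intro p q hp h
    induction h with
    | refl => exact hp
    | tail _ h2 _ => exact h2.2.1
  -- membership facts
  have hmem : ∀ (k : Fin s) (q : ℕ × ℕ), q ∈ P k → IdxP n q.1 q.2 := by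
    intro k q hq
    obtain ⟨⟨p0, hp0, hT⟩, _, _⟩ := hPfree k
    rw [hT] at hq
    exact hvalid p0 q hp0 hq
  have hrow : ∀ (k : Fin s) (q : ℕ × ℕ), q ∈ P k → q.2 < n := by
    intro k q hq
    have h1 := (hmem k q hq).2.2
    rcases lt_or_eq_of_le h1 with h | h
    · exact h
    · exfalso
      have : ((q.1, n) : ℕ × ℕ) ∈ P k := by
        have : q = (q.1, n) := by rw [← h]
        rwa [← this]
      exact (hPfree k).2.2 q.1 this
  have hclosed : ∀ (k : Fin s) (q q' : ℕ × ℕ), q ∈ P k → Step n x q q' → q' ∈ P k := by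
    intro k q q' hq hs
    obtain ⟨⟨p0, hp0, hT⟩, _, _⟩ := hPfree k
    rw [hT] at hq ⊢
    exact Relation.ReflTransGen.tail hq hs
  have heqv : ∀ (k : Fin s) (q q' : ℕ × ℕ), q ∈ P k → q' ∈ P k →
      x q.1 q.2 = x q'.1 q'.2 := by
    intro k q q' hq hq'
    obtain ⟨⟨p0, hp0, hT⟩, _, _⟩ := hPfree k
    rw [hT] at hq hq'
    exact (hval p0 q hq).symm.trans (hval p0 q' hq')
  have hfin : ∀ (k : Fin s) (r : ℕ), ({i : ℕ | (i, r) ∈ P k}).Finite := by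
    intro k r
    apply Set.Finite.subset (Set.finite_Icc 1 n)
    intro i hi
    have := hmem k (i, r) hi
    exact ⟨this.1, le_trans this.2.1 this.2.2⟩
  -- the key step: two entries of a tile in one row force entries in the rows below and above
  have key : ∀ (k : Fin s) (r i1 i2 : ℕ), i1 < i2 → (i1, r) ∈ P k → (i2, r) ∈ P k →
      (i1, r - 1) ∈ P k ∧ (i1 + 1, r + 1) ∈ P k := by
    intro k r i1 i2 hlt h1 h2
    have hv1 := hmem k _ h1
    have hv2 := hmem k _ h2
    simp only [IdxP] at hv1 hv2
    have hrn : r < n := hrow k _ h1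
    have hceq : x i1 r = x i2 r := heqv k _ _ h1 h2
    have e1 : x (i1+1) r = x i1 r := by
      refine le_antisymm (hstep i1 r hv1.1 (by omega) (by omega)) ?_
      rw [hceq]
      exact hmono (i1+1) i2 r (by omega) hlt hv2.2.1 (by omega)
    obtain ⟨j0, rfl⟩ : ∃ j0, r = j0 + 1 := ⟨r - 1, by omega⟩
    obtain ⟨A, B⟩ := hineq i1 j0 hv1.1 (by omega) (by omega)
    have elo : x i1 (j0+1) = x i1 j0 := by
      refine le_antisymm ?_ A
      rw [← e1]; exact B
    constructor
    · have : Step n x (i1, j0+1) (i1, j0) := by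
        refine ⟨⟨hv1.1, hv1.2.1, hv1.2.2⟩, ⟨hv1.1, by omega, by omega⟩, ?_, elo⟩
        exact Or.inr (Or.inr (Or.inr ⟨rfl, rfl⟩))
      have := hclosed k _ _ h1 this
      simpa using this
    · obtain ⟨C, D⟩ := hineq (i1+1) (j0+1) (by omega) (by omega) (by omega)
      obtain ⟨E, F⟩ := hineq i1 (j0+1) hv1.1 (by omega) (by omega)
      have ehi : x i1 (j0+1) = x (i1+1) (j0+2) := by
        refine le_antisymm ?_ F
        rw [← e1]; exact C
      have : Step n x (i1, j0+1) (i1+1, j0+2) := by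
        refine ⟨⟨hv1.1, hv1.2.1, hv1.2.2⟩, ⟨by omega, by omega, by omega⟩, ?_, ehi⟩
        exact Or.inl ⟨rfl, rfl⟩
      have := hclosed k _ _ h1 this
      simpa using this
  -- a row-slice of a free tile is a singleton whenever an adjacent row-slice is empty
  have singleton : ∀ (k : Fin s) (r : ℕ) (i1 i2 : ℕ),
      (i1, r) ∈ P k → (i2, r) ∈ P k →
      (∀ i, (i, r - 1) ∉ P k) ∨ (∀ i, (i, r + 1) ∉ P k) → i1 = i2 := by
    intro k r i1 i2 h1 h2 hside
    by_contra hne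
    rcases Nat.lt_or_ge i1 i2 with h | h
    · obtain ⟨klo, khi⟩ := key k r i1 i2 h h1 h2
      rcases hside with hs | hs
      · exact hs i1 klo
      · exact hs (i1+1) khi
    · have h' : i2 < i1 := by omega
      obtain ⟨klo, khi⟩ := key k r i2 i1 h' h2 h1
      rcases hside with hs | hs
      · exact hs i2 klo
      · exact hs (i2+1) khi
  -- translate ncard statements
  have hcard1 : ∀ (k : Fin s) (r : ℕ),
      ({i : ℕ | (i, r) ∈ P k}).ncard ≠ 0 →
      (∀ i, (i, r - 1) ∉ P k) ∨ (∀ i, (i, r + 1) ∉ P k) →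
      ({i : ℕ | (i, r) ∈ P k}).ncard = 1 := by
    intro k r hne hside
    obtain ⟨i0, hi0⟩ := Set.nonempty_of_ncard_ne_zero hne
    rw [Set.ncard_eq_one]
    exact ⟨i0, Set.eq_singleton_iff_unique_mem.mpr
      ⟨hi0, fun i hi => singleton k r i i0 hi hi0 hside⟩⟩
  have hempty : ∀ (k : Fin s) (r : ℕ), ({i : ℕ | (i, r) ∈ P k}).ncard = 0 →
      ∀ i, (i, r) ∉ P k := by
    intro k r h0 i hi
    have : ({i : ℕ | (i, r) ∈ P k}).ncard ≠ 0 :=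
      Set.ncard_ne_zero_of_mem hi (hfin k r)
    exact this h0
  have hmatN : ∀ (k : Fin s) (j : Fin (n-2)),
      tileMatN n s P j k = ({i : ℕ | (i, j.1 + 2) ∈ P k}).ncard := fun _ _ => rfl
  have part1 : ∀ (k : Fin s) (j : Fin (n - 2)), tileMatN n s P j k ≠ 0 →
      (∀ j' : Fin (n - 2), j' < j → tileMatN n s P j' k = 0) → tileMatN n s P j k = 1 := by
    intro k j hne hbelow
    rw [hmatN] at hne ⊢
    apply hcard1 k (j.1 + 2) hne
    left
    intro i hi
    rcases Nat.eq_zero_or_pos j.1 with h0 | h0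
    · -- row below is row 1, only (1,1) valid
      have hv := hmem k _ hi
      simp only [IdxP] at hv
      have : i = 1 := by omega
      subst this
      have : ((1,1) : ℕ × ℕ) ∈ P k := by
        have h11 : j.1 + 2 - 1 = 1 := by omega
        rwa [h11] at hi
      exact (hPfree k).2.1 this
    · have hj' : j.1 - 1 < n - 2 := by omega
      have hz := hbelow ⟨j.1 - 1, hj'⟩ (by simp [Fin.lt_def]; omega)
      rw [hmatN] at hz
      have hr : (⟨j.1 - 1, hj'⟩ : Fin (n-2)).1 + 2 = j.1 + 2 - 1 := by simp; omega
      exact hempty k _ hz i (by rwa [hr])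
  have part2 : ∀ (k : Fin s) (j : Fin (n - 2)), tileMatN n s P j k ≠ 0 →
      (∀ j' : Fin (n - 2), j < j' → tileMatN n s P j' k = 0) → tileMatN n s P j k = 1 := by
    intro k j hne habove
    rw [hmatN] at hne ⊢
    apply hcard1 k (j.1 + 2) hne
    right
    intro i hi
    have hv := hrow k _ hi
    simp only at hv
    -- j.1 + 3 < n, so j.1 + 1 < n - 2
    have hj' : j.1 + 1 < n - 2 := by omega
    have hz := habove ⟨j.1 + 1, hj'⟩ (by simp [Fin.lt_def])
    rw [hmatN] at hz
    exact hempty k _ hz i (by simpa using hi)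
  refine ⟨part1, part2, ?_⟩
  intro h4 _ j k
  subst h4
  by_cases h0 : tileMatN 4 s P j k = 0
  · exact Or.inl h0
  · right
    have hj2 : j.1 < 2 := j.isLt
    rcases (by omega : j.1 = 0 ∨ j.1 = 1) with h | h
    · apply part1 k j h0
      intro j' hj'
      exact absurd (Fin.lt_def.mp hj') (by omega)
    · apply part2 k j h0
      intro j' hj'
      have := j'.isLt
      exact absurd (Fin.lt_def.mp hj') (by omega)
end

section
/- The map x ↦ x̃ defined by x̃_{ij} = 0 if 1 ≤ i = j ≤ n+1 and x̃_{ij} = x_{i,j−1} if 1 ≤ i < j ≤ n+1 is an injective linear map X_n → X_{n+1} that sends GT-patterns to GT-patterns and sends vertices of GT-polytopes to vertices of GT-polytopes. -/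
/-- The embedding `Xₙ ↪ X_{n+1}`: zero on the new diagonal, shifting all rows up by one. -/
noncomputable def emb (x : ℕ → ℕ → ℝ) : ℕ → ℕ → ℝ :=
  fun i j => if i = j then 0 else x i (j - 1)

/-! On arrays supported in the triangle, `emb` has the linear left inverse `y ↦ (y_{i,j+1})`.
Every point of `GT((λ,0),(0,μ))` has zero diagonal, since its first row sum is `0` and the
interlacing makes the diagonal a nonnegative decreasing sequence. Hence this inverse maps
`GT((λ,0),(0,μ))` back into `GT(λ,μ)`, so `emb` is a bijection between the two polytopes whose
inverse is affine, and such a bijection carries extreme points to extreme points. -/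

open Set

section ExtremePoints

variable {𝕜 E F : Type*} [Ring 𝕜] [PartialOrder 𝕜] [IsOrderedRing 𝕜] [AddCommGroup E]
  [Module 𝕜 E] [AddCommGroup F] [Module 𝕜 F]

theorem Set.InvOn.mapsTo_extremePoints {f : E → F} {g : F →ᵃ[𝕜] E} {s : Set E} {t : Set F}
    (hinv : InvOn g f s t) (hf : MapsTo f s t) (hg : MapsTo g t s) :
    MapsTo f (s.extremePoints 𝕜) (t.extremePoints 𝕜) := by
  rintro x ⟨hxs, hx⟩
  refine ⟨hf hxs, fun y₁ hy₁ y₂ hy₂ hfx => ?_⟩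
  have hgx : x ∈ openSegment 𝕜 (g y₁) (g y₂) := by
    rw [← image_openSegment, ← hinv.1 hxs]
    exact mem_image_of_mem g hfx
  rw [← hinv.2 hy₁, hx (hg hy₁) (hg hy₂) hgx]

end ExtremePoints

/-- The diagonal of `emb x` vanishes, so the `j`-th row sum of `emb x` is the `(j - 1)`-th row sum
of `x`: with this indexing the zero is prepended to `μ`, not appended. -/
def prependZero (mu : ℕ → ℤ) : ℕ → ℤ := fun t => if t = 1 then 0 else mu (t - 1)

lemma sum_Icc_prependZero (mu : ℕ → ℤ) (j : ℕ) :
    ∑ t ∈ Finset.Icc 1 (j + 1), (prependZero mu t : ℝ) = ∑ t ∈ Finset.Icc 1 j, (mu t : ℝ) := by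
  induction j with
  | zero => simp [prependZero]
  | succ k ih =>
    rw [Finset.sum_Icc_succ_top (by omega), ih, Finset.sum_Icc_succ_top (by omega)]
    simp [prependZero]

noncomputable def embInv (n : ℕ) : (ℕ → ℕ → ℝ) →ₗ[ℝ] ℕ → ℕ → ℝ where
  toFun y i j := if IdxP n i j then y i (j + 1) else 0
  map_add' y z := by ext i j; simp only [Pi.add_apply]; split_ifs <;> simp
  map_smul' c y := by ext i j; simp only [Pi.smul_apply]; split_ifs <;> simp

lemma emb_apply_of_lt {x : ℕ → ℕ → ℝ} {i j : ℕ} (h : i < j) : emb x i j = x i (j - 1) :=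
  if_neg h.ne

lemma embInv_apply_of_idxP {n i j : ℕ} (y : ℕ → ℕ → ℝ) (h : IdxP n i j) :
    embInv n y i j = y i (j + 1) :=
  if_pos h

lemma embInv_emb {n : ℕ} {x : ℕ → ℕ → ℝ} (hx : ∀ i j, ¬ IdxP n i j → x i j = 0) :
    embInv n (emb x) = x := by
  ext i j
  by_cases h : IdxP n i j
  · rw [embInv_apply_of_idxP _ h, emb_apply_of_lt (by omega), Nat.add_sub_cancel]
  · simp [embInv, h, hx i j h]

lemma emb_embInv {n : ℕ} {y : ℕ → ℕ → ℝ} (hdiag : ∀ k, y k k = 0)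
    (hy : ∀ i j, ¬ IdxP (n + 1) i j → y i j = 0) : emb (embInv n y) = y := by
  ext i j
  rcases lt_trichotomy i j with h | rfl | h
  · rw [emb_apply_of_lt h]
    by_cases hij : IdxP (n + 1) i j
    · rw [embInv_apply_of_idxP _ (by omega), Nat.sub_add_cancel (by omega)]
    · rw [hy i j hij]
      exact if_neg (by omega)
  · simp [emb, hdiag]
  · rw [hy i j (by omega)]
    simp [emb, h.ne', embInv, show ¬ IdxP n i (j - 1) by omega]

lemma isGTPattern_emb {n : ℕ} {x : ℕ → ℕ → ℝ} (hx : IsGTPattern n x) :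
    IsGTPattern (n + 1) (emb x) := by
  obtain ⟨hnonneg, hinter⟩ := hx
  refine ⟨fun i j ⟨hi, hij, hj⟩ => ?_, fun i j hi hij hj => ?_⟩
  · rcases hij.lt_or_eq with hij | rfl
    · rw [emb_apply_of_lt hij]
      exact hnonneg i (j - 1) ⟨hi, by omega, by omega⟩
    · simp [emb]
  · rw [emb_apply_of_lt (by omega : i < j + 1), Nat.add_sub_cancel]
    rcases hij.lt_or_eq with hij | rfl
    · rw [emb_apply_of_lt hij, emb_apply_of_lt (by omega), Nat.add_sub_cancel]
      have := hinter i (j - 1) hi (by omega) (by omega)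
      rwa [Nat.sub_add_cancel (by omega)] at this
    · simpa [emb] using hnonneg i i ⟨hi, le_rfl, by omega⟩

lemma IsGTPattern.diag_eq_zero {n : ℕ} {y : ℕ → ℕ → ℝ} (hy : IsGTPattern n y) (h₁ : y 1 1 = 0)
    {k : ℕ} (hk : 1 ≤ k) (hkn : k ≤ n) : y k k = 0 := by
  induction k, hk using Nat.le_induction with
  | base => exact h₁
  | succ k hk ih =>
    have hle := (hy.2 k k hk le_rfl hkn).2
    have hnonneg := hy.1 (k + 1) (k + 1) ⟨by omega, le_rfl, hkn⟩
    linarith [ih (by omega)]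

lemma GTMem.diag_eq_zero {n : ℕ} {lam mu : ℕ → ℤ} {y : ℕ → ℕ → ℝ}
    (hy : GTMem n lam (prependZero mu) y) (k : ℕ) : y k k = 0 := by
  by_cases hk : IdxP n k k
  · have h₁ : y 1 1 = 0 := by simpa [prependZero] using hy.2.2.2 1 le_rfl (by omega)
    exact hy.1.diag_eq_zero h₁ hk.1 hk.2.2
  · exact hy.2.1 k k hk

lemma gtMem_emb {n : ℕ} {lam mu : ℕ → ℤ} {x : ℕ → ℕ → ℝ} (hx : GTMem n lam mu x) :
    GTMem (n + 1) (Function.update lam (n + 1) 0) (prependZero mu) (emb x) := by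
  obtain ⟨hpat, hzero, htop, hsum⟩ := hx
  refine ⟨isGTPattern_emb hpat, fun i j hij => ?_, fun i hi hin => ?_, fun j hj hjn => ?_⟩
  · rcases eq_or_ne i j with rfl | hne
    · exact if_pos rfl
    · rw [emb, if_neg hne, hzero i (j - 1) (by omega)]
  · rcases hin.lt_or_eq with hin | rfl
    · rw [emb_apply_of_lt hin, Nat.add_sub_cancel, htop i hi (by omega),
        Function.update_of_ne (by omega)]
    · simp [emb]
  · obtain ⟨k, rfl⟩ : ∃ k, j = k + 1 := ⟨j - 1, by omega⟩
    rw [Finset.sum_Icc_succ_top (by omega), sum_Icc_prependZero]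
    have hrow : ∀ i ∈ Finset.Icc 1 k, emb x i (k + 1) = x i k := fun i hi => by
      rw [emb_apply_of_lt (by simp at hi; omega), Nat.add_sub_cancel]
    rw [Finset.sum_congr rfl hrow, show emb x (k + 1) (k + 1) = 0 from if_pos rfl, add_zero]
    rcases Nat.eq_zero_or_pos k with rfl | hk
    · simp
    · exact hsum k hk (by omega)

lemma gtMem_embInv {n : ℕ} {lam mu : ℕ → ℤ} {y : ℕ → ℕ → ℝ}
    (hy : GTMem (n + 1) (Function.update lam (n + 1) 0) (prependZero mu) y) :
    GTMem n lam mu (embInv n y) := by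
  have hdiag := hy.diag_eq_zero
  obtain ⟨⟨hnonneg, hinter⟩, -, htop, hsum⟩ := hy
  refine ⟨⟨fun i j hij => ?_, fun i j hi hij hj => ?_⟩, fun i j hij => if_neg hij,
    fun i hi hin => ?_, fun j hj hjn => ?_⟩
  · rw [embInv_apply_of_idxP _ hij]
    exact hnonneg i (j + 1) ⟨hij.1, by omega, by omega⟩
  · rw [embInv_apply_of_idxP _ ⟨hi, hij, by omega⟩, embInv_apply_of_idxP _ ⟨hi, by omega, hj⟩,
      embInv_apply_of_idxP _ ⟨by omega, by omega, hj⟩]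
    exact hinter i (j + 1) hi (by omega) (by omega)
  · rw [embInv_apply_of_idxP _ ⟨hi, hin, le_rfl⟩, htop i hi (by omega),
      Function.update_of_ne (by omega)]
  · have hrow : ∀ i ∈ Finset.Icc 1 j, embInv n y i j = y i (j + 1) := fun i hi => by
      rw [embInv_apply_of_idxP _ (by simp at hi; omega)]
    have hs := hsum (j + 1) (by omega) (by omega)
    rwa [Finset.sum_Icc_succ_top (by omega), hdiag, add_zero, sum_Icc_prependZero,
      ← Finset.sum_congr rfl hrow] at hs

lemma invOn_embInv_emb (n : ℕ) (lam mu : ℕ → ℤ) :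
    InvOn (embInv n) emb {x | GTMem n lam mu x}
      {y | GTMem (n + 1) (Function.update lam (n + 1) 0) (prependZero mu) y} :=
  ⟨fun _ hx => embInv_emb hx.2.1, fun _ hy => emb_embInv hy.diag_eq_zero hy.2.1⟩

/-- The map `x ↦ x̃` is linear and injective on `Xₙ`, sends GT-patterns to GT-patterns, and
sends vertices of GT-polytopes to vertices of GT-polytopes. -/
theorem stmt12 (n : ℕ) :
    (∀ (a b : ℝ) (x y : ℕ → ℕ → ℝ),
      emb (fun i j => a * x i j + b * y i j) = fun i j => a * emb x i j + b * emb y i j) ∧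
    (∀ x y : ℕ → ℕ → ℝ, (∀ i j, ¬ IdxP n i j → x i j = 0) →
      (∀ i j, ¬ IdxP n i j → y i j = 0) → emb x = emb y → x = y) ∧
    (∀ x : ℕ → ℕ → ℝ, IsGTPattern n x → (∀ i j, ¬ IdxP n i j → x i j = 0) →
      IsGTPattern (n + 1) (emb x)) ∧
    (∀ lam mu : ℕ → ℤ, ∃ lam' mu' : ℕ → ℤ,
      (∀ x, GTMem n lam mu x → GTMem (n + 1) lam' mu' (emb x)) ∧
      (∀ x, x ∈ Set.extremePoints ℝ {y | GTMem n lam mu y} →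
        emb x ∈ Set.extremePoints ℝ {y | GTMem (n + 1) lam' mu' y})) := by
  refine ⟨fun a b x y => ?_, fun x y hx hy hxy => ?_, fun x hx _ => isGTPattern_emb hx,
    fun lam mu => ⟨_, _, fun x => gtMem_emb, ?_⟩⟩
  · ext i j
    by_cases h : i = j <;> simp [emb, h]
  · rw [← embInv_emb hx, ← embInv_emb hy, hxy]
  · exact (invOn_embInv_emb n lam mu).mapsTo_extremePoints (g := (embInv n).toAffineMap)
      (fun _ => gtMem_emb) (fun _ => gtMem_embInv)
end

section
/- For k ≥ 2, the (2k−1) × (2k−1) integer matrix A with first column (1, 2, ..., k−1, k, k−1, ..., 2, 1)ᵀ, with A_{j,j+1} = 1 for 1 ≤ j ≤ k−1, A_{j,j} = 1 for k+1 ≤ j ≤ 2k−1, and all other entries 0, has determinant ±k. In particular A is nonsingular but not unimodular. -/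
/-- The `(2k-1) × (2k-1)` tiling matrix of the counterexample family: first column
`(1, 2, …, k-1, k, k-1, …, 2, 1)ᵀ`, with `A_{j,j+1} = 1` for `1 ≤ j ≤ k-1` and `A_{j,j} = 1`
for `k+1 ≤ j ≤ 2k-1` (1-indexed), all other entries `0`. -/
def ctrMat (k : ℕ) : Matrix (Fin (2 * k - 1)) (Fin (2 * k - 1)) ℤ := fun r c =>
  if c.1 = 0 then ((min (r.1 + 1) (2 * k - 1 - r.1) : ℕ) : ℤ)
  else if r.1 + 1 ≤ k - 1 ∧ c.1 = r.1 + 1 then 1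
  else if k ≤ r.1 ∧ c.1 = r.1 then 1
  else 0

/-- The permutation sending `0 ↦ k-1`, `c ↦ c-1` for `1 ≤ c ≤ k-1`, and fixing the rest. -/
def ctrPerm (k : ℕ) (hk : 1 ≤ k) : Equiv.Perm (Fin (2 * k - 1)) where
  toFun c := ⟨if c.1 = 0 then k - 1 else if c.1 ≤ k - 1 then c.1 - 1 else c.1, by
    rcases c with ⟨c, hc⟩; dsimp only; split_ifs <;> omega⟩
  invFun r := ⟨if r.1 = k - 1 then 0 else if r.1 < k - 1 then r.1 + 1 else r.1, by
    rcases r with ⟨r, hr⟩; dsimp only; split_ifs <;> omega⟩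
  left_inv c := by
    rcases c with ⟨c, hc⟩
    ext; simp only
    split_ifs <;> first | omega | exact (‹False›).elim
  right_inv r := by
    rcases r with ⟨r, hr⟩
    ext; simp only
    split_ifs <;> first | omega | exact (‹False›).elim

/-- For `k ≥ 2` this matrix has determinant `±k`; in particular it is nonsingular but not
unimodular. -/
theorem stmt15 (k : ℕ) (hk : 2 ≤ k) :
    ((ctrMat k).det = (k : ℤ) ∨ (ctrMat k).det = -(k : ℤ)) ∧
    (ctrMat k).det ≠ 0 ∧ ¬ IsUnit (ctrMat k).det := by
  have hk1 : 1 ≤ k := by omega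
  set σ := ctrPerm k hk1 with hσ
  set N := (ctrMat k).submatrix σ id with hN
  -- N is lower triangular
  have htri : N.BlockTriangular OrderDual.toDual := by
    intro r c hlt
    rcases r with ⟨r, hr⟩; rcases c with ⟨c, hc⟩
    have hlt' : r < c := hlt
    simp only [hN, Matrix.submatrix_apply, id_eq, hσ, ctrPerm, ctrMat, Equiv.coe_fn_mk]
    split_ifs <;> first | rfl | omega | exact (‹False›).elim
  have hdiag : ∀ r : Fin (2 * k - 1), N r r = if (r : ℕ) = 0 then (k : ℤ) else 1 := by
    intro r
    rcases r with ⟨r, hr⟩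
    simp only [hN, Matrix.submatrix_apply, id_eq, hσ, ctrPerm, ctrMat, Equiv.coe_fn_mk]
    split_ifs <;> first | rfl | omega | exact (‹False›).elim
  have hNdet : N.det = (k : ℤ) := by
    rw [Matrix.det_of_lowerTriangular N htri]
    have h0 : (0 : ℕ) < 2 * k - 1 := by omega
    rw [Fintype.prod_eq_single (⟨0, h0⟩ : Fin (2 * k - 1))]
    · rw [hdiag]; simp
    · intro x hx
      rw [hdiag]
      rw [if_neg]
      intro h
      exact hx (by ext; exact h)
  have hperm : N.det = (Equiv.Perm.sign σ : ℤ) * (ctrMat k).det := by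
    rw [hN]; exact Matrix.det_permute σ (ctrMat k)
  have hkey : (Equiv.Perm.sign σ : ℤ) * (ctrMat k).det = (k : ℤ) := by
    rw [← hperm, hNdet]
  rcases Int.units_eq_one_or (Equiv.Perm.sign σ) with hs | hs <;> rw [hs] at hkey
  · simp only [Units.val_one, one_mul] at hkey
    refine ⟨Or.inl hkey, ?_, ?_⟩
    · rw [hkey]; exact_mod_cast (by omega : (k : ℤ) ≠ 0)
    · rw [hkey]
      intro h
      have := Int.isUnit_iff.mp h
      omega
  · simp only [Units.val_neg, Units.val_one, neg_mul, one_mul, neg_eq_iff_eq_neg] at hkey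
    refine ⟨Or.inr hkey, ?_, ?_⟩
    · rw [hkey]; intro h; omega
    · rw [hkey]
      intro h
      have := Int.isUnit_iff.mp h
      omega
end

section
/- For every k ≥ 2, there exist λ, μ ∈ ℤ^{2k+1} such that the Gelfand–Tsetlin polytope GT(λ,μ) has a vertex some of whose coordinates are rational numbers with denominator exactly k. In particular, for every n ≥ 5 there exists a GT-polytope in X_n with a non-integral vertex, disproving the Berenstein–Kirillov conjecture. -/
/-!
Take `λ = (k^k, k-1, 0^k)` and `μ = ((k-1)^{k+1}, 1^k)`, padded with zeros. The vertex is best read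
column by column: column `i ≤ k` is `(k-1)(k+1-i)/k` on the diagonal, then the plateau value
`(k²-1)/k = k - 1/k` for `k` rows, then `k`; column `k+1` rises from `0` by `(k-1)/k` per row up to
`k-1`; all later columns vanish.

It is a vertex because it is the only point of the polytope that satisfies with equality every
defining inequality it satisfies with equality. Such a point is constant on each constant stretch
of a column; the equalities `x_{i,k} = x_{i,k+1} = x_{i+1,k+1}` make the first `k` entries of row
`k+1` equal, and the row sum forces them to be the plateau value; every remaining entry is then the
only unknown of its row, so the row sums fix it.
-/

open Finset

lemma Finset.eq_of_sum_eq_of_forall_ne {ι M : Type*} [DecidableEq ι] [AddCancelCommMonoid M]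
    {s : Finset ι} {f g : ι → M} {a : ι} (ha : a ∈ s) (hsum : ∑ i ∈ s, f i = ∑ i ∈ s, g i)
    (h : ∀ i ∈ s, i ≠ a → f i = g i) : f a = g a := by
  rw [← add_sum_erase s f ha, ← add_sum_erase s g ha,
    sum_congr rfl fun i hi => h i (mem_of_mem_erase hi) (ne_of_mem_erase hi)] at hsum
  exact add_right_cancel hsum

lemma Finset.sum_Ioc_eq_of_forall {f : ℕ → ℝ} {a b : ℕ} {c : ℝ} (h : ∀ i ∈ Ioc a b, f i = c) :
    ∑ i ∈ Ioc a b, f i = (b - a : ℕ) * c := by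
  rw [sum_eq_card_nsmul h, Nat.card_Ioc, nsmul_eq_mul]

lemma Finset.Icc_one_eq_Ioc_zero (j : ℕ) : Icc 1 j = Ioc 0 j := Icc_add_one_left_eq_Ioc 0 j

lemma eq_zero_of_mul_add_mul_eq_zero {p q u v : ℝ} (hp : 0 < p) (hq : 0 < q) (hu : 0 ≤ u)
    (hv : 0 ≤ v) (h : p * u + q * v = 0) : u = 0 := by
  have := (add_eq_zero_iff_of_nonneg (mul_nonneg hp.le hu) (mul_nonneg hq.le hv)).1 h
  exact (mul_eq_zero.1 this.1).resolve_left hp.ne'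

lemma Rat.den_eq_one_of_cast_eq_intCast {r : ℚ} {m : ℤ} (h : (r : ℝ) = m) : r.den = 1 := by
  rw [show r = m by exact_mod_cast h, Rat.den_intCast]

namespace GTMem

def SharesTight (n : ℕ) (x y : ℕ → ℕ → ℝ) : Prop :=
  (∀ i j, IdxP n i j → x i j = 0 → y i j = 0) ∧
  (∀ i j, 1 ≤ i → i ≤ j → j + 1 ≤ n → x i (j + 1) = x i j → y i (j + 1) = y i j) ∧
  (∀ i j, 1 ≤ i → i ≤ j → j + 1 ≤ n → x (i + 1) (j + 1) = x i j → y (i + 1) (j + 1) = y i j)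

variable {n : ℕ} {lam mu : ℕ → ℤ} {x y z : ℕ → ℕ → ℝ}

lemma sharesTight_of_mem_openSegment (hy : GTMem n lam mu y) (hz : GTMem n lam mu z)
    (hx : x ∈ openSegment ℝ y z) : SharesTight n x y := by
  obtain ⟨p, q, hp, hq, -, rfl⟩ := hx
  obtain ⟨⟨hy0, hyi⟩, -⟩ := hy
  obtain ⟨⟨hz0, hzi⟩, -⟩ := hz
  refine ⟨fun i j hij h => ?_, fun i j hi hij hj h => ?_, fun i j hi hij hj h => ?_⟩ <;>
    simp only [Pi.add_apply, Pi.smul_apply, smul_eq_mul] at h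
  · exact eq_zero_of_mul_add_mul_eq_zero hp hq (hy0 i j hij) (hz0 i j hij) h
  · refine sub_eq_zero.1 (eq_zero_of_mul_add_mul_eq_zero hp hq (sub_nonneg.2 (hyi i j hi hij hj).1)
      (sub_nonneg.2 (hzi i j hi hij hj).1) ?_)
    linear_combination h
  · refine (sub_eq_zero.1 (eq_zero_of_mul_add_mul_eq_zero hp hq
      (sub_nonneg.2 (hyi i j hi hij hj).2) (sub_nonneg.2 (hzi i j hi hij hj).2) ?_)).symm
    linear_combination -h

theorem mem_extremePoints_of_sharesTight_imp_eq (hx : GTMem n lam mu x)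
    (h : ∀ y, GTMem n lam mu y → SharesTight n x y → y = x) :
    x ∈ Set.extremePoints ℝ {y | GTMem n lam mu y} :=
  ⟨hx, fun y hy _ hz hxyz => h y hy (sharesTight_of_mem_openSegment hy hz hxyz)⟩

lemma SharesTight.eq_of_column_const (hT : SharesTight n x y) {i j₁ j₂ : ℕ} (hi : 1 ≤ i)
    (hij : i ≤ j₁) (hj : j₁ ≤ j₂) (hn : j₂ ≤ n) (hx : ∀ j ∈ Icc j₁ j₂, x i j = x i j₁) :
    y i j₂ = y i j₁ := by
  induction j₂, hj using Nat.le_induction with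
  | base => rfl
  | succ j hj ih =>
    have hxj : ∀ j' ∈ Icc j₁ j, x i j' = x i j₁ := fun j' hj' =>
      hx j' (Icc_subset_Icc_right j.le_succ hj')
    rw [hT.2.1 i j hi (hij.trans hj) hn (by rw [hx _ (right_mem_Icc.2 (by omega)),
      hxj _ (right_mem_Icc.2 hj)]), ih (by omega) hxj]

lemma rowSum_eq (hx : GTMem n lam mu x) (hy : GTMem n lam mu y) {j : ℕ} (hj : 1 ≤ j)
    (hjn : j ≤ n) : ∑ i ∈ Icc 1 j, y i j = ∑ i ∈ Icc 1 j, x i j := by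
  rw [hx.2.2.2 j hj hjn, hy.2.2.2 j hj hjn]

lemma SharesTight.eq_of_column_const_above (hx : GTMem n lam mu x) (hy : GTMem n lam mu y)
    (hT : SharesTight n x y) {i j : ℕ} (hij : IdxP n i j)
    (hconst : ∀ j' ∈ Icc j n, x i j' = x i j) : y i j = x i j := by
  obtain ⟨hi, hij, hjn⟩ := hij
  rw [← hT.eq_of_column_const hi hij hjn le_rfl hconst, hy.2.2.1 i hi (hij.trans hjn),
    ← hx.2.2.1 i hi (hij.trans hjn), hconst n (right_mem_Icc.2 hjn)]

end GTMem

namespace BerensteinKirillov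

open GTMem

def lam (k i : ℕ) : ℤ := if i ≤ k then k else if i = k + 1 then k - 1 else 0

def mu (k t : ℕ) : ℤ := if t ≤ k + 1 then k - 1 else if t ≤ 2 * k + 1 then 1 else 0

noncomputable def plateau (k : ℕ) : ℝ := (k - 1) * (k + 1) / k

noncomputable def entry (k i j : ℕ) : ℝ :=
  if i ≤ k then
    if j = i then (k - 1) * (k + 1 - i) / k else if j ≤ i + k then plateau k else k
  else if i = k + 1 then
    if j ≤ 2 * k then (k - 1) * (j - (k + 1)) / k else k - 1
  else 0

noncomputable def vertex (k n i j : ℕ) : ℝ := if IdxP n i j then entry k i j else 0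

variable {k n i j : ℕ}

lemma entry_diag (hi : i ≤ k) : entry k i i = (k - 1) * (k + 1 - i) / k := by
  simp [entry, hi]

lemma entry_plateau (hi : i ≤ k) (hij : i < j) (hj : j ≤ i + k) : entry k i j = plateau k := by
  simp [entry, hi, hij.ne', hj]

lemma entry_of_add_lt (hi : i ≤ k) (hj : i + k < j) : entry k i j = k := by
  rw [entry, if_pos hi, if_neg (by omega), if_neg (by omega)]

lemma entry_succ_of_le (hj : j ≤ 2 * k) : entry k (k + 1) j = (k - 1) * (j - (k + 1)) / k := by
  simp [entry, hj]

lemma entry_succ_of_lt (hj : 2 * k < j) : entry k (k + 1) j = k - 1 := by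
  rw [entry, if_neg (by omega), if_pos rfl, if_neg (by omega)]

lemma entry_of_lt (hi : k + 1 < i) : entry k i j = 0 := by
  rw [entry, if_neg (by omega), if_neg (by omega)]

lemma plateau_nonneg (hk : 1 ≤ k) : 0 ≤ plateau k := by
  have : (1 : ℝ) ≤ k := by exact_mod_cast hk
  unfold plateau; positivity

lemma plateau_le (hk : 1 ≤ k) : plateau k ≤ k := by
  have : (1 : ℝ) ≤ k := by exact_mod_cast hk
  rw [plateau, div_le_iff₀ (by linarith)]; nlinarith

lemma sub_one_le_plateau (hk : 1 ≤ k) : (k : ℝ) - 1 ≤ plateau k := by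
  have : (1 : ℝ) ≤ k := by exact_mod_cast hk
  rw [plateau, le_div_iff₀ (by linarith)]; nlinarith

lemma entry_nonneg (hk : 1 ≤ k) (hij : i ≤ j) : 0 ≤ entry k i j := by
  have hk' : (1 : ℝ) ≤ k := by exact_mod_cast hk
  rcases (by omega : i ≤ k ∨ i = k + 1 ∨ k + 1 < i) with hi | rfl | hi
  · rcases (by omega : i = j ∨ (i < j ∧ j ≤ i + k) ∨ i + k < j) with rfl | ⟨h₁, h₂⟩ | h
    · have : (i : ℝ) ≤ k := by exact_mod_cast hi
      rw [entry_diag hi]; apply div_nonneg <;> nlinarith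
    · rw [entry_plateau hi h₁ h₂]; exact plateau_nonneg hk
    · rw [entry_of_add_lt hi h]; positivity
  · rcases le_or_gt j (2 * k) with h | h
    · have : (k : ℝ) + 1 ≤ j := by exact_mod_cast hij
      rw [entry_succ_of_le h]; apply div_nonneg <;> nlinarith
    · rw [entry_succ_of_lt h]; linarith
  · rw [entry_of_lt hi]

lemma entry_le_entry_succ (hk : 1 ≤ k) (hij : i ≤ j) : entry k i j ≤ entry k i (j + 1) := by
  have hk' : (1 : ℝ) ≤ k := by exact_mod_cast hk
  rcases (by omega : i ≤ k ∨ i = k + 1 ∨ k + 1 < i) with hi | rfl | hi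
  · rcases (by omega : i = j ∨ (i < j ∧ j < i + k) ∨ j = i + k ∨ i + k < j)
      with rfl | ⟨h₁, h₂⟩ | rfl | h
    · rw [entry_diag hi, entry_plateau hi (by omega) (by omega), plateau]
      gcongr; linarith
    · rw [entry_plateau hi h₁ h₂.le, entry_plateau hi (by omega) h₂]
    · rw [entry_plateau hi (by omega) le_rfl, entry_of_add_lt hi (by omega)]
      exact plateau_le hk
    · rw [entry_of_add_lt hi h, entry_of_add_lt hi (by omega)]
  · rcases (by omega : j < 2 * k ∨ j = 2 * k ∨ 2 * k < j) with h | rfl | h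
    · rw [entry_succ_of_le h.le, entry_succ_of_le h]
      gcongr; linarith
    · rw [entry_succ_of_le le_rfl, entry_succ_of_lt (by omega), div_le_iff₀ (by linarith)]
      push_cast; nlinarith
    · rw [entry_succ_of_lt h, entry_succ_of_lt (by omega)]
  · rw [entry_of_lt hi, entry_of_lt hi]

lemma entry_succ_succ_le (hk : 1 ≤ k) (hij : i ≤ j) : entry k (i + 1) (j + 1) ≤ entry k i j := by
  have hk' : (1 : ℝ) ≤ k := by exact_mod_cast hk
  rcases (by omega : i < k ∨ k = i ∨ i = k + 1 ∨ k + 1 < i) with hi | rfl | rfl | hi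
  · rcases (by omega : i = j ∨ (i < j ∧ j ≤ i + k) ∨ i + k < j) with rfl | ⟨h₁, h₂⟩ | h
    · rw [entry_diag hi.le, entry_diag hi]
      gcongr; linarith
    · rw [entry_plateau hi.le h₁ h₂, entry_plateau hi (by omega) (by omega)]
    · rw [entry_of_add_lt hi.le h, entry_of_add_lt hi (by omega)]
  · rcases (by omega : k = j ∨ (k < j ∧ j < 2 * k) ∨ 2 * k ≤ j) with rfl | ⟨h₁, h₂⟩ | h
    · rw [entry_diag le_rfl, entry_succ_of_le (by omega)]
      push_cast; apply div_le_div_of_nonneg_right _ (by linarith); nlinarith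
    · rw [entry_plateau le_rfl h₁ (by omega), entry_succ_of_le h₂]
      refine le_trans ?_ (sub_one_le_plateau hk)
      rw [div_le_iff₀ (by linarith)]; push_cast
      have : (j : ℝ) + 1 ≤ 2 * k := by exact_mod_cast h₂
      nlinarith
    · rw [entry_succ_of_lt (by omega)]
      rcases h.eq_or_lt with rfl | h
      · rw [entry_plateau le_rfl (by omega) (by omega)]; exact sub_one_le_plateau hk
      · rw [entry_of_add_lt le_rfl (by omega)]; linarith
  · rw [entry_of_lt (by omega)]; exact entry_nonneg hk (by omega)
  · rw [entry_of_lt hi, entry_of_lt (by omega)]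

lemma sum_mu_of_le (hj : j ≤ k + 1) : ∑ t ∈ Ioc 0 j, (mu k t : ℝ) = j * (k - 1) := by
  rw [sum_Ioc_eq_of_forall (c := k - 1) fun t ht => by
    simp [mu, (mem_Ioc.1 ht).2.trans hj]]
  simp

lemma sum_mu_of_le_of_le (h₁ : k + 1 ≤ j) (h₂ : j ≤ 2 * k + 1) :
    ∑ t ∈ Ioc 0 j, (mu k t : ℝ) = (k + 1) * (k - 1) + (j - (k + 1)) := by
  rw [← sum_Ioc_consecutive _ (Nat.zero_le _) h₁, sum_mu_of_le le_rfl,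
    sum_Ioc_eq_of_forall (c := 1) fun t ht => by
      rw [mem_Ioc] at ht; rw [mu, if_neg (by omega), if_pos (by omega), Int.cast_one]]
  push_cast [Nat.cast_sub h₁]; ring

lemma sum_mu_of_ge (hj : 2 * k + 1 ≤ j) :
    ∑ t ∈ Ioc 0 j, (mu k t : ℝ) = (k + 1) * (k - 1) + k := by
  rw [← sum_Ioc_consecutive _ (Nat.zero_le _) hj, sum_mu_of_le_of_le (by omega) le_rfl,
    sum_Ioc_eq_of_forall (c := 0) fun t ht => by
      rw [mem_Ioc] at ht; rw [mu, if_neg (by omega), if_neg (by omega), Int.cast_zero]]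
  push_cast; ring

lemma sum_entry_of_le (hk : 1 ≤ k) (hj : j ≤ k) :
    ∑ i ∈ Ioc 0 j, entry k i j = j * (k - 1) := by
  rcases j with _ | j
  · simp
  rw [sum_Ioc_succ_top (Nat.zero_le _), entry_diag hj,
    sum_Ioc_eq_of_forall fun i hi => by
      rw [mem_Ioc] at hi; exact entry_plateau (by omega) (by omega) (by omega)]
  have : (k : ℝ) ≠ 0 := by positivity
  rw [plateau, Nat.sub_zero]; field_simp; push_cast; ring

lemma sum_entry_of_le_of_le (hk : 1 ≤ k) (h₁ : k + 1 ≤ j) (h₂ : j ≤ 2 * k) :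
    ∑ i ∈ Ioc 0 j, entry k i j = (k + 1) * (k - 1) + (j - (k + 1)) := by
  rw [← sum_Ioc_consecutive _ (Nat.zero_le (k + 1)) h₁,
    ← sum_Ioc_consecutive _ (Nat.zero_le k) (Nat.le_succ k),
    ← sum_Ioc_consecutive _ (Nat.zero_le (j - (k + 1))) (by omega : j - (k + 1) ≤ k),
    sum_Ioc_eq_of_forall (c := k) fun i hi => by
      rw [mem_Ioc] at hi; exact entry_of_add_lt (by omega) (by omega),
    sum_Ioc_eq_of_forall (c := plateau k) fun i hi => by
      rw [mem_Ioc] at hi; exact entry_plateau hi.2 (by omega) (by omega),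
    sum_Ioc_succ_top le_rfl, Ioc_self, sum_empty, zero_add, entry_succ_of_le h₂,
    sum_Ioc_eq_of_forall (c := 0) fun i hi => by
      rw [mem_Ioc] at hi; exact entry_of_lt hi.1]
  have : (k : ℝ) ≠ 0 := by positivity
  push_cast [Nat.sub_zero, Nat.cast_sub h₁, Nat.cast_sub (by omega : j - (k + 1) ≤ k)]
  rw [plateau]; field_simp; ring

lemma sum_entry_of_ge (h : 2 * k + 1 ≤ j) :
    ∑ i ∈ Ioc 0 j, entry k i j = (k + 1) * (k - 1) + k := by
  rw [← sum_Ioc_consecutive _ (Nat.zero_le (k + 1)) (by omega : k + 1 ≤ j),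
    ← sum_Ioc_consecutive _ (Nat.zero_le k) (Nat.le_succ k),
    sum_Ioc_eq_of_forall (c := k) fun i hi => by
      rw [mem_Ioc] at hi; exact entry_of_add_lt hi.2 (by omega),
    sum_Ioc_succ_top le_rfl, Ioc_self, sum_empty, zero_add, entry_succ_of_lt (by omega),
    sum_Ioc_eq_of_forall (c := 0) fun i hi => by
      rw [mem_Ioc] at hi; exact entry_of_lt hi.1]
  push_cast [Nat.sub_zero]; ring

lemma vertex_of_idxP (h : IdxP n i j) : vertex k n i j = entry k i j := if_pos h

lemma sum_vertex (hjn : j ≤ n) : ∑ i ∈ Icc 1 j, vertex k n i j = ∑ i ∈ Ioc 0 j, entry k i j := by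
  rw [← Icc_one_eq_Ioc_zero]
  exact sum_congr rfl fun i hi => vertex_of_idxP ⟨(mem_Icc.1 hi).1, (mem_Icc.1 hi).2, hjn⟩

lemma entry_of_two_mul_lt (hj : 2 * k < j) : entry k i j = lam k i := by
  rcases (by omega : i ≤ k ∨ i = k + 1 ∨ k + 1 < i) with hi | rfl | hi
  · rw [entry_of_add_lt hi (by omega), lam, if_pos hi, Int.cast_natCast]
  · rw [entry_succ_of_lt hj, lam, if_neg (by omega), if_pos rfl]; push_cast; ring
  · rw [entry_of_lt hi, lam, if_neg (by omega), if_neg (by omega), Int.cast_zero]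

theorem vertex_mem (hk : 1 ≤ k) (hn : 2 * k + 1 ≤ n) : GTMem n (lam k) (mu k) (vertex k n) := by
  refine ⟨⟨fun i j h => ?_, fun i j hi hij hj => ?_⟩, fun i j h => if_neg h,
    fun i hi hin => ?_, fun j _ hjn => ?_⟩
  · rw [vertex_of_idxP h]; exact entry_nonneg hk h.2.1
  · rw [vertex_of_idxP ⟨hi, hij, by omega⟩, vertex_of_idxP ⟨hi, by omega, hj⟩,
      vertex_of_idxP ⟨by omega, by omega, hj⟩]
    exact ⟨entry_le_entry_succ hk hij, entry_succ_succ_le hk hij⟩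
  · rw [vertex_of_idxP ⟨hi, hin, le_rfl⟩, entry_of_two_mul_lt (by omega)]
  · rw [sum_vertex hjn, Icc_one_eq_Ioc_zero]
    rcases (by omega : j ≤ k ∨ (k + 1 ≤ j ∧ j ≤ 2 * k) ∨ 2 * k + 1 ≤ j) with h | ⟨h₁, h₂⟩ | h
    · rw [sum_entry_of_le hk h, sum_mu_of_le (by omega)]
    · rw [sum_entry_of_le_of_le hk h₁ h₂, sum_mu_of_le_of_le h₁ (by omega)]
    · rw [sum_entry_of_ge h, sum_mu_of_ge h]

section uniqueness
variable {y : ℕ → ℕ → ℝ}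

lemma row_succ_eq_first (hn : 2 * k + 1 ≤ n) (hT : SharesTight n (vertex k n) y)
    (hi : 1 ≤ i) (hik : i ≤ k) : y i (k + 1) = y 1 (k + 1) := by
  induction i, hi using Nat.le_induction with
  | base => rfl
  | succ i hi ih =>
    have hcol : vertex k n i (k + 1) = vertex k n i k := by
      rw [vertex_of_idxP ⟨hi, by omega, by omega⟩, vertex_of_idxP ⟨hi, by omega, by omega⟩,
        entry_plateau (by omega) (by omega) (by omega),
        entry_plateau (by omega) (by omega) (by omega)]
    have hdiag : vertex k n (i + 1) (k + 1) = vertex k n i k := by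
      rw [vertex_of_idxP ⟨by omega, by omega, by omega⟩, vertex_of_idxP ⟨hi, by omega, by omega⟩,
        entry_plateau (by omega) (by omega) (by omega),
        entry_plateau (by omega) (by omega) (by omega)]
    rw [hT.2.2 i k hi (by omega) (by omega) hdiag, ← hT.2.1 i k hi (by omega) (by omega) hcol,
      ih (by omega)]

lemma row_succ_eq_plateau (hk : 1 ≤ k) (hn : 2 * k + 1 ≤ n) (hy : GTMem n (lam k) (mu k) y)
    (hT : SharesTight n (vertex k n) y) (hi : 1 ≤ i) (hik : i ≤ k) : y i (k + 1) = plateau k := by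
  have hzero : y (k + 1) (k + 1) = 0 := by
    refine hT.1 _ _ ⟨by omega, le_rfl, by omega⟩ ?_
    rw [vertex_of_idxP ⟨by omega, le_rfl, by omega⟩, entry_succ_of_le (by omega)]
    push_cast; ring
  have hsum := rowSum_eq (vertex_mem hk hn) hy (j := k + 1) (by omega) (by omega)
  rw [sum_Icc_succ_top (by omega), hzero, add_zero,
    sum_eq_card_nsmul fun i' hi' => row_succ_eq_first hn hT (mem_Icc.1 hi').1 (mem_Icc.1 hi').2,
    sum_vertex (by omega), sum_entry_of_le_of_le hk le_rfl (by omega), Nat.card_Icc,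
    nsmul_eq_mul] at hsum
  have : (k : ℝ) ≠ 0 := by positivity
  rw [row_succ_eq_first hn hT hi hik, plateau, eq_div_iff this]
  push_cast at hsum; linarith

lemma eq_plateau (hk : 1 ≤ k) (hn : 2 * k + 1 ≤ n) (hy : GTMem n (lam k) (mu k) y)
    (hT : SharesTight n (vertex k n) y) (hi : 1 ≤ i) (hik : i ≤ k) (hij : i < j) (hj : j ≤ i + k)
    (hjn : j ≤ n) : y i j = plateau k := by
  have hplat : ∀ j', i < j' → j' ≤ i + k → j' ≤ n → vertex k n i j' = plateau k :=
    fun j' h₁ h₂ h₃ => by rw [vertex_of_idxP ⟨hi, h₁.le, h₃⟩, entry_plateau hik h₁ h₂]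
  rw [← row_succ_eq_plateau hk hn hy hT hi hik]
  rcases le_total j (k + 1) with hjk | hjk
  · refine (hT.eq_of_column_const hi hij.le hjk (by omega) fun j' hj' => ?_).symm
    rw [mem_Icc] at hj'
    rw [hplat j' (by omega) (by omega) (by omega), hplat j hij hj hjn]
  · refine hT.eq_of_column_const hi (by omega) hjk hjn fun j' hj' => ?_
    rw [mem_Icc] at hj'
    rw [hplat j' (by omega) (by omega) (by omega), hplat (k + 1) (by omega) (by omega) (by omega)]

lemma eq_vertex_of_column_determined (hk : 1 ≤ k) (hn : 2 * k + 1 ≤ n)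
    (hy : GTMem n (lam k) (mu k) y) (hT : SharesTight n (vertex k n) y) (h : IdxP n i j)
    (hdiag : ¬ (i ≤ k ∧ j = i)) (hsucc : ¬ (i = k + 1 ∧ k + 1 < j ∧ j ≤ 2 * k)) :
    y i j = vertex k n i j := by
  obtain ⟨hi, hij, hjn⟩ := id h
  have hcol : ∀ j', j ≤ j' → j' ≤ n → vertex k n i j' = entry k i j' := fun j' h₁ h₂ =>
    vertex_of_idxP ⟨hi, hij.trans h₁, h₂⟩
  have hzero (h0 : entry k i j = 0) : y i j = vertex k n i j := by
    have hv : vertex k n i j = 0 := (hcol j le_rfl hjn).trans h0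
    rw [hv]; exact hT.1 i j h hv
  have htop (hconst : ∀ j', j ≤ j' → j' ≤ n → entry k i j' = entry k i j) :
      y i j = vertex k n i j :=
    hT.eq_of_column_const_above (vertex_mem hk hn) hy h fun j' hj' => by
      rw [mem_Icc] at hj'; rw [hcol j' hj'.1 hj'.2, hcol j le_rfl hjn, hconst j' hj'.1 hj'.2]
  rcases (by omega : i ≤ k ∨ i = k + 1 ∨ k + 1 < i) with hik | rfl | hik
  · rcases (by omega : j ≤ i + k ∨ i + k < j) with hj | hj
    · rw [vertex_of_idxP h, entry_plateau hik (by omega) hj]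
      exact eq_plateau hk hn hy hT hi hik (by omega) hj hjn
    · exact htop fun j' hj' _ => by rw [entry_of_add_lt hik (by omega), entry_of_add_lt hik hj]
  · rcases (by omega : j = k + 1 ∨ 2 * k < j) with rfl | hj
    · exact hzero (by rw [entry_succ_of_le (by omega)]; push_cast; ring)
    · exact htop fun j' hj' _ => by rw [entry_succ_of_lt (by omega), entry_succ_of_lt hj]
  · exact hzero (entry_of_lt hik)

lemma eq_vertex (hk : 1 ≤ k) (hn : 2 * k + 1 ≤ n) (hy : GTMem n (lam k) (mu k) y)
    (hT : SharesTight n (vertex k n) y) : y = vertex k n := by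
  funext i j
  by_cases h : IdxP n i j
  · by_cases hs : (i ≤ k ∧ j = i) ∨ (i = k + 1 ∧ k + 1 < j ∧ j ≤ 2 * k)
    -- such a cell is the only one of its row that is not determined within its column
    · refine eq_of_sum_eq_of_forall_ne (f := (y · j)) (mem_Icc.2 ⟨h.1, h.2.1⟩)
        (rowSum_eq (vertex_mem hk hn) hy (h.1.trans h.2.1) h.2.2) fun i' hi' hne => ?_
      rw [mem_Icc] at hi'
      exact eq_vertex_of_column_determined hk hn hy hT ⟨hi'.1, hi'.2, h.2.2⟩ (by omega) (by omega)
    · exact eq_vertex_of_column_determined hk hn hy hT h (by omega) (by omega)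
  · rw [hy.2.1 i j h, vertex, if_neg h]

end uniqueness

theorem vertex_mem_extremePoints (hk : 1 ≤ k) (hn : 2 * k + 1 ≤ n) :
    vertex k n ∈ Set.extremePoints ℝ {y | GTMem n (lam k) (mu k) y} :=
  mem_extremePoints_of_sharesTight_imp_eq (vertex_mem hk hn) fun _ hy hT => eq_vertex hk hn hy hT

lemma vertex_one_two (hk : 1 ≤ k) (hn : 2 * k + 1 ≤ n) :
    vertex k n 1 2 = (((k : ℚ) - (k : ℚ)⁻¹ : ℚ) : ℝ) := by
  have : (k : ℝ) ≠ 0 := by positivity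
  rw [vertex_of_idxP ⟨le_rfl, by omega, by omega⟩, entry_plateau hk (by omega) (by omega), plateau]
  push_cast; field_simp; ring

lemma den_natCast_sub_inv (hk : 1 ≤ k) : ((k : ℚ) - (k : ℚ)⁻¹).den = k := by
  rw [Rat.natCast_sub_den, Rat.inv_natCast_den_of_pos hk]

theorem exists_mem_extremePoints_den_eq (hk : 1 ≤ k) (hn : 2 * k + 1 ≤ n) :
    ∃ (lam mu : ℕ → ℤ) (x : ℕ → ℕ → ℝ), x ∈ Set.extremePoints ℝ {y | GTMem n lam mu y} ∧
      ∃ (i j : ℕ) (r : ℚ), IdxP n i j ∧ x i j = r ∧ r.den = k :=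
  ⟨lam k, mu k, vertex k n, vertex_mem_extremePoints hk hn, 1, 2, _,
    ⟨le_rfl, by omega, by omega⟩, vertex_one_two hk hn, den_natCast_sub_inv hk⟩

end BerensteinKirillov

/-- For every `k ≥ 2` there is a GT-polytope in `X_{2k+1}` with a vertex having a coordinate of
denominator exactly `k`; in particular for every `n ≥ 5` there is a GT-polytope in `Xₙ` with a
non-integral vertex, disproving the Berenstein--Kirillov conjecture. -/
theorem stmt16 :
    (∀ k : ℕ, 2 ≤ k → ∃ (lam mu : ℕ → ℤ) (x : ℕ → ℕ → ℝ),
      x ∈ Set.extremePoints ℝ {y | GTMem (2 * k + 1) lam mu y} ∧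
      ∃ (i j : ℕ) (r : ℚ), IdxP (2 * k + 1) i j ∧ x i j = (r : ℝ) ∧ r.den = k) ∧
    (∀ n : ℕ, 5 ≤ n → ∃ (lam mu : ℕ → ℤ) (x : ℕ → ℕ → ℝ),
      x ∈ Set.extremePoints ℝ {y | GTMem n lam mu y} ∧
      ∃ i j : ℕ, IdxP n i j ∧ ¬ ∃ m : ℤ, x i j = (m : ℝ)) := by
  refine ⟨fun k hk => BerensteinKirillov.exists_mem_extremePoints_den_eq (by omega) le_rfl,
    fun n hn => ?_⟩
  obtain ⟨lam, mu, x, hx, i, j, r, hij, hr, hden⟩ :=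
    BerensteinKirillov.exists_mem_extremePoints_den_eq (k := 2) (by norm_num) hn
  refine ⟨lam, mu, x, hx, i, j, hij, fun ⟨m, hm⟩ => ?_⟩
  have := Rat.den_eq_one_of_cast_eq_intCast (hr ▸ hm)
  omega
end
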